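/- arXiv:2503.21147 — 3 statements merged into one kernel-verified Lean document; each statement's English description precedes it below -/
import Mathlib

section
/- For every β ≥ 0, h ∈ ℝ, finite Λ ⊂ ℤ³, x ∈ Λ, m ∈ ℕ, t ∈ ℝ, and every increasing event A ∈ F_{Λ∖B_m(x)}: exp[−4|∂B_m||t|] · Σ_{y∈∂B_m(x)∩Λ} ⟨σ_y;I_A⟩_{Λ,β,h} ≤ Σ_{y∈∂B_m(x)∩Λ} ⟨σ_y;I_A⟩_{Λ,β,g(t)} ≤ exp[4|∂B_m||t|] · Σ_{y∈∂B_m(x)∩Λ} ⟨σ_y;I_A⟩_{Λ,β,h}, where g(t) ∈ ℝ^Λ is the field equal to h + t on ∂B_m(x) ∩ Λ and equal to h elsewhere. -/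
open scoped BigOperators
open Classical Filter MeasureTheory

namespace Ising

/-- Vertices of the lattice `T×Z` are the points of `ℤ³`. -/
abbrev V : Type := ℤ × ℤ × ℤ

/-- The eight difference vectors defining adjacency in `T×Z`:
`±(1,0,0), ±(0,1,0), ±(1,1,0), ±(0,0,1)`. -/
def dirs : Finset V :=
  {(1,0,0), (-1,0,0), (0,1,0), (0,-1,0), (1,1,0), (-1,-1,0), (0,0,1), (0,0,-1)}

/-- Adjacency in the lattice `T×Z`. -/
def adj (x y : V) : Prop := y - x ∈ dirs

/-- The neighbours of a vertex in `T×Z`. -/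
def nbrs (x : V) : Finset V := dirs.image (fun d => x + d)

/-- Euclidean distance on `ℤ³`. -/
noncomputable def edist (x y : V) : ℝ :=
  Real.sqrt ((((x.1 - y.1) ^ 2 + (x.2.1 - y.2.1) ^ 2 + (x.2.2 - y.2.2) ^ 2 : ℤ) : ℝ))

/-- Spin configurations on all of `ℤ³`; `true` codes `+1` and `false` codes `-1`. -/
abbrev Config : Type := V → Bool

/-- The `±1`-valued spin at a vertex. -/
noncomputable def spin (σ : Config) (x : V) : ℝ := if σ x then 1 else -1

/-- Extension of a configuration on a finite `Λ` by `-1` (i.e. `false`) outside `Λ`. -/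
noncomputable def extend (Λ : Finset V) (σ : Λ → Bool) : Config :=
  fun v => if h : v ∈ Λ then σ ⟨v, h⟩ else false

/-- (Negative of the) Hamiltonian on `Λ` with inverse temperature `β`, boundary
condition `η : V → ℤ` (only values outside `Λ` matter) and field `J : V → ℝ`
(only values on `Λ` matter): the edge sum is over ordered pairs, divided by two. -/
noncomputable def energy (Λ : Finset V) (β : ℝ) (η : V → ℤ) (J : V → ℝ) (σ : Config) : ℝ :=
  β * ((∑ x ∈ Λ, ∑ y ∈ Λ, if adj x y then spin σ x * spin σ y else 0) / 2)
    + β * (∑ x ∈ Λ, ∑ y ∈ nbrs x, if y ∉ Λ then spin σ x * ((η y : ℤ) : ℝ) else 0)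
    + ∑ x ∈ Λ, J x * spin σ x

/-- Boltzmann weight. -/
noncomputable def weight (Λ : Finset V) (β : ℝ) (η : V → ℤ) (J : V → ℝ) (σ : Config) : ℝ :=
  Real.exp (energy Λ β η J σ)

/-- The partition function. -/
noncomputable def Zpart (Λ : Finset V) (β : ℝ) (η : V → ℤ) (J : V → ℝ) : ℝ :=
  ∑ σ : Λ → Bool, weight Λ β η J (extend Λ σ)

/-- The finite-volume Ising probability of an event `A`. -/
noncomputable def prob (Λ : Finset V) (β : ℝ) (η : V → ℤ) (J : V → ℝ) (A : Set Config) : ℝ :=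
  (∑ σ : Λ → Bool, if extend Λ σ ∈ A then weight Λ β η J (extend Λ σ) else 0) / Zpart Λ β η J

/-- Finite-volume expectation `⟨f⟩`. -/
noncomputable def expec (Λ : Finset V) (β : ℝ) (η : V → ℤ) (J : V → ℝ) (f : Config → ℝ) : ℝ :=
  (∑ σ : Λ → Bool, f (extend Λ σ) * weight Λ β η J (extend Λ σ)) / Zpart Λ β η J

/-- Finite-volume covariance `⟨f;g⟩ = ⟨fg⟩ - ⟨f⟩⟨g⟩`. -/
noncomputable def covar (Λ : Finset V) (β : ℝ) (η : V → ℤ) (J : V → ℝ) (f g : Config → ℝ) : ℝ :=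
  expec Λ β η J (fun σ => f σ * g σ) - expec Λ β η J f * expec Λ β η J g

/-- Conditional probability `P(A | B)`. -/
noncomputable def condProb (Λ : Finset V) (β : ℝ) (η : V → ℤ) (J : V → ℝ)
    (A B : Set Config) : ℝ :=
  prob Λ β η J (A ∩ B) / prob Λ β η J B

/-- Indicator function of an event. -/
noncomputable def ind (A : Set Config) : Config → ℝ := fun σ => if σ ∈ A then 1 else 0

/-- The box `B_n = [-n,n]³ ∩ ℤ³`. -/
noncomputable def box (n : ℕ) : Finset V :=
  Finset.Icc (-(n : ℤ)) (n : ℤ) ×ˢ (Finset.Icc (-(n : ℤ)) (n : ℤ) ×ˢ Finset.Icc (-(n : ℤ)) (n : ℤ))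

/-- The translated box `B_m(x) = x + B_m`. -/
noncomputable def boxAt (m : ℕ) (x : V) : Finset V := (box m).image (fun v => x + v)

/-- The (inner) boundary `∂Λ` of a set of vertices. -/
noncomputable def bdry (Λ : Finset V) : Finset V := Λ.filter (fun x => ∃ y ∈ nbrs x, y ∉ Λ)

/-- An event is increasing if it is preserved by raising spins. -/
def Increasing (A : Set Config) : Prop :=
  ∀ σ τ : Config, σ ∈ A → (∀ v, σ v ≤ τ v) → τ ∈ A

/-- `A ∈ F_Δ`: the event `A` is determined by the spins in `Δ`. -/
def DependsOn (A : Set Config) (Δ : Set V) : Prop :=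
  ∀ σ τ : Config, (∀ v ∈ Δ, σ v = τ v) → (σ ∈ A ↔ τ ∈ A)

/-- The event `{A occurs on Δ}`. -/
def occursOn (A : Set Config) (Δ : Set V) : Set Config :=
  {σ | ∀ τ : Config, (∀ v ∈ Δ, τ v = σ v) → τ ∈ A}

/-- `σ^{Δ+}` (for `b = true`) resp. `σ^{Δ-}` (for `b = false`). -/
noncomputable def forceOn (σ : Config) (Δ : Set V) (b : Bool) : Config :=
  fun v => if v ∈ Δ then b else σ v

/-- The event `{Δ is pivotal for A}`. -/
def pivotal (A : Set Config) (Δ : Set V) : Set Config :=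
  {σ | forceOn σ Δ true ∈ A ∧ forceOn σ Δ false ∉ A}

/-- The event `{x is +pivotal for A}`. -/
def plusPivotal (A : Set Config) (x : V) : Set Config :=
  pivotal A {x} ∩ {σ | σ x = true}

/-- The slab `S_k = ℤ² × {0,…,k}`. -/
def slab (k : ℕ) : Set V := {x | 0 ≤ x.2.2 ∧ x.2.2 ≤ (k : ℤ)}

/-- The event `{∃ LR +crossing in B_n ∩ S_k}`: a path of `+` spins inside `B_n ∩ S_k`
meeting both hyperplanes `{x(1) = -n}` and `{x(1) = n}`. -/
def crossing (n k : ℕ) : Set Config :=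
  {σ | ∃ l : List V, l.Chain' adj ∧ (∀ v ∈ l, v ∈ box n ∧ v ∈ slab k ∧ σ v = true) ∧
      (∃ u ∈ l, u.1 = -(n : ℤ)) ∧ (∃ u ∈ l, u.1 = (n : ℤ))}

/-- `Λ_{(1)}`: the vertices of `Λ` with third coordinate `1`. -/
def lamOne (Λ : Finset V) : Finset V := Λ.filter (fun x => x.2.2 = 1)

/-- The Bernoulli(p) weight `P_p(ω) = p^{|ω⁻¹(1)|}(1-p)^{|ω⁻¹(0)|}`. -/
noncomputable def bern (p : ℝ) (Δ : Finset V) (ω : Δ → Bool) : ℝ :=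
  ∏ y : Δ, (if ω y then p else 1 - p)

/-- `ω⁻¹(1)` as a set of vertices. -/
def openSet (Δ : Finset V) (ω : Δ → Bool) : Set V :=
  {v | ∃ h : v ∈ Δ, ω ⟨v, h⟩ = true}

/-- The measure `μ_{Λ,p,h}` of an event `A` (with free boundary conditions,
inverse temperature `β`, vertex-percolation parameter `p` and field `h`). -/
noncomputable def mu (Λ : Finset V) (β p h : ℝ) (A : Set Config) : ℝ :=
  ∑ ω : lamOne Λ → Bool,
    bern p (lamOne Λ) ω *
      prob Λ β (fun _ => 0) (fun _ => h) (occursOn A (slab 0 ∪ openSet (lamOne Λ) ω))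

/-- The field equal to `h + t` on `∂B_m(x) ∩ Λ` and to `h` elsewhere. -/
noncomputable def gfield (Λ : Finset V) (m : ℕ) (x : V) (h t : ℝ) : V → ℝ :=
  fun y => if y ∈ bdry (boxAt m x) ∩ Λ then h + t else h

/-- Characterization of the regime `β ∈ [0, β_c(T×Z))`: exponential decay of the
two-point function at zero field, uniformly in the volume. -/
def expDecay (β : ℝ) : Prop :=
  ∃ C > (0 : ℝ), ∃ c > (0 : ℝ), ∀ Λ : Finset V, ∀ x ∈ Λ, ∀ y ∈ Λ,
    expec Λ β (fun _ => 0) (fun _ => 0) (fun σ => spin σ x * spin σ y)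
      ≤ C * Real.exp (-c * edist x y)

/-- There is a path of spins `b` (in `T×Z`) from `x` to `y` in the configuration `σ`. -/
def pathIn (σ : Config) (b : Bool) (x y : V) : Prop :=
  ∃ l : List V, l.Chain' adj ∧ l.head? = some x ∧ l.getLast? = some y ∧ ∀ v ∈ l, σ v = b

/-- The `b`-cluster of a vertex. -/
def cluster (σ : Config) (b : Bool) (x : V) : Set V := {y | pathIn σ b x y}

/-- The set `{x : σ_x = b}` has exactly one infinite connected component in `T×Z`. -/
def uniqueInfCluster (σ : Config) (b : Bool) : Prop :=
  ∃ x : V, σ x = b ∧ (cluster σ b x).Infinite ∧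
    ∀ y : V, σ y = b → (cluster σ b y).Infinite → cluster σ b y = cluster σ b x

/-- The event `H(x,ω)` resp. `H(y,ω^{(y)})` at the level of open sets:
`{(crossing n 1) occurs on S_0 ∪ S ∪ {x}}`. -/
def Hx (n : ℕ) (S : Set V) (x : V) : Set Config :=
  occursOn (crossing n 1) (slab 0 ∪ S ∪ {x})


section Abstract
variable {ι : Type*} [Fintype ι]

noncomputable def SW (W f : (ι → Bool) → ℝ) : ℝ := ∑ c, W c * f c

noncomputable def covU (W f g : (ι → Bool) → ℝ) : ℝ :=
  SW W (fun c => f c * g c) * SW W (fun _ => 1) - SW W f * SW W g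

lemma SW_congr (W f g : (ι → Bool) → ℝ) (h : ∀ c, f c = g c) : SW W f = SW W g := by
  unfold SW; exact Finset.sum_congr rfl fun c _ => by rw [h c]

lemma SW_add (W f g : (ι → Bool) → ℝ) :
    SW W (fun c => f c + g c) = SW W f + SW W g := by
  unfold SW; rw [← Finset.sum_add_distrib]; exact Finset.sum_congr rfl fun c _ => by ring

lemma SW_smul (W f : (ι → Bool) → ℝ) (k : ℝ) :
    SW W (fun c => k * f c) = k * SW W f := by
  unfold SW; rw [Finset.mul_sum]; exact Finset.sum_congr rfl fun c _ => by ring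

lemma covU_shift (W f g : (ι → Bool) → ℝ) (k l : ℝ) :
    covU W (fun c => f c + k) (fun c => g c + l) = covU W f g := by
  unfold covU
  have e1 : SW W (fun c => (f c + k) * (g c + l))
      = SW W (fun c => f c * g c) + (l * SW W f + (k * SW W g + (k*l) * SW W (fun _ => 1))) := by
    rw [← SW_smul W f l, ← SW_smul W g k, ← SW_smul W (fun _ => 1) (k*l),
      ← SW_add, ← SW_add, ← SW_add]
    exact SW_congr _ _ _ fun c => by ring
  have e2 : SW W (fun c => f c + k) = SW W f + k * SW W (fun _ => 1) := by
    rw [← SW_smul W (fun _ => 1) k, ← SW_add]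
    exact SW_congr _ _ _ fun c => by ring
  have e3 : SW W (fun c => g c + l) = SW W g + l * SW W (fun _ => 1) := by
    rw [← SW_smul W (fun _ => 1) l, ← SW_add]
    exact SW_congr _ _ _ fun c => by ring
  rw [e1, e2, e3]; ring

/-- FKG: nonnegativity of covariance for log-supermodular nonneg weights and monotone f, g. -/
lemma covU_nonneg (W f g : (ι → Bool) → ℝ) (hW : ∀ c, 0 ≤ W c)
    (hls : ∀ a b : ι → Bool, W a * W b ≤ W (a ⊓ b) * W (a ⊔ b))
    (hf : Monotone f) (hg : Monotone g) : 0 ≤ covU W f g := by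
  classical
  set f' : (ι → Bool) → ℝ := fun c => f c - f ⊥ with hf'def
  set g' : (ι → Bool) → ℝ := fun c => g c - g ⊥ with hg'def
  have ef : (fun c => f' c + f ⊥) = f := funext fun c => by simp [f']
  have eg : (fun c => g' c + g ⊥) = g := funext fun c => by simp [g']
  have hshift : covU W f g = covU W f' g' := by rw [← ef, ← eg, covU_shift]
  rw [hshift]
  have h := fkg (μ := W) (f := f') (g := g') hW
    (fun c => sub_nonneg.2 (hf bot_le)) (fun c => sub_nonneg.2 (hg bot_le))
    (fun a b hab => by simp only [f']; exact sub_le_sub_right (hf hab) _)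
    (fun a b hab => by simp only [g']; exact sub_le_sub_right (hg hab) _) hls
  unfold covU SW
  simp only [mul_one]
  nlinarith [h]


/-- restricted sum over configurations with `c z = b` -/
noncomputable def Sb (W f : (ι → Bool) → ℝ) (z : ι) (b : Bool) : ℝ :=
  ∑ c, if c z = b then W c * f c else 0

lemma SW_split (W f : (ι → Bool) → ℝ) (z : ι) :
    SW W f = Sb W f z true + Sb W f z false := by
  unfold SW Sb
  rw [← Finset.sum_add_distrib]
  refine Finset.sum_congr rfl fun c _ => ?_
  cases h : c z <;> simp [h]

lemma SW_delta (W f : (ι → Bool) → ℝ) (z : ι) :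
    SW W (fun c => f c * (if c z then (1:ℝ) else -1)) = Sb W f z true - Sb W f z false := by
  unfold SW Sb
  rw [← Finset.sum_sub_distrib]
  refine Finset.sum_congr rfl fun c _ => ?_
  cases h : c z <;> simp [h] <;> ring

/-- restricted weight -/
noncomputable def Wres (W : (ι → Bool) → ℝ) (z : ι) (b : Bool) : (ι → Bool) → ℝ :=
  fun c => if c z = b then W c else 0

lemma Sb_eq_SW_Wres (W f : (ι → Bool) → ℝ) (z : ι) (b : Bool) :
    Sb W f z b = SW (Wres W z b) f := by
  unfold Sb SW Wres
  refine Finset.sum_congr rfl fun c _ => ?_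
  by_cases h : c z = b <;> simp [h]

lemma Wres_nonneg (W : (ι → Bool) → ℝ) (hW : ∀ c, 0 ≤ W c) (z : ι) (b : Bool) :
    ∀ c, 0 ≤ Wres W z b c := fun c => by
  unfold Wres; by_cases h : c z = b <;> simp [h, hW c]

lemma Wres_ls (W : (ι → Bool) → ℝ) (hW : ∀ c, 0 ≤ W c)
    (hls : ∀ a b : ι → Bool, W a * W b ≤ W (a ⊓ b) * W (a ⊔ b)) (z : ι) (b : Bool) :
    ∀ x y : ι → Bool, Wres W z b x * Wres W z b y ≤ Wres W z b (x ⊓ y) * Wres W z b (x ⊔ y) := by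
  intro x y
  have hR : 0 ≤ Wres W z b (x ⊓ y) * Wres W z b (x ⊔ y) :=
    mul_nonneg (Wres_nonneg W hW z b _) (Wres_nonneg W hW z b _)
  by_cases hx : x z = b
  · by_cases hy : y z = b
    · have hinf : (x ⊓ y) z = b := by
        have h' : (x ⊓ y) z = x z ⊓ y z := rfl
        rw [h', hx, hy]; cases b <;> rfl
      have hsup : (x ⊔ y) z = b := by
        have h' : (x ⊔ y) z = x z ⊔ y z := rfl
        rw [h', hx, hy]; cases b <;> rfl
      unfold Wres
      simp only [if_pos hx, if_pos hy, if_pos hinf, if_pos hsup]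
      exact hls x y
    · have hL : Wres W z b x * Wres W z b y = 0 := by
        unfold Wres; rw [if_neg hy, mul_zero]
      rw [hL]; exact hR
  · have hL : Wres W z b x * Wres W z b y = 0 := by
      unfold Wres; rw [if_neg hx, zero_mul]
    rw [hL]; exact hR


lemma Sb_pos (W : (ι → Bool) → ℝ) (hW : ∀ c, 0 < W c) (z : ι) (b : Bool) :
    0 < Sb W (fun _ => 1) z b := by
  unfold Sb
  refine Finset.sum_pos' (fun c _ => by by_cases h : c z = b <;> simp [h, le_of_lt (hW c)]) ?_
  refine ⟨fun _ => b, Finset.mem_univ _, ?_⟩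
  simp [le_of_lt (hW _), hW _]

lemma Sb_shift (W f : (ι → Bool) → ℝ) (z : ι) (b : Bool) (k : ℝ) :
    Sb W (fun c => f c + k) z b = Sb W f z b + k * Sb W (fun _ => 1) z b := by
  unfold Sb
  rw [Finset.mul_sum, ← Finset.sum_add_distrib]
  refine Finset.sum_congr rfl fun c _ => ?_
  by_cases h : c z = b <;> simp [h] <;> ring

/-- Holley-type monotonicity: conditioning on `σ_z = +` raises monotone f. Unnormalized form. -/
lemma holley_mono (W f : (ι → Bool) → ℝ) (hW : ∀ c, 0 ≤ W c)
    (hls : ∀ a b : ι → Bool, W a * W b ≤ W (a ⊓ b) * W (a ⊔ b))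
    (hf : Monotone f) (z : ι) :
    0 ≤ Sb W f z true * Sb W (fun _ => 1) z false
      - Sb W f z false * Sb W (fun _ => 1) z true := by
  classical
  set f' : (ι → Bool) → ℝ := fun c => f c - f ⊥ with hf'def
  have hf'0 : ∀ c, 0 ≤ f' c := fun c => sub_nonneg.2 (hf bot_le)
  have hf'mono : Monotone f' := fun a b hab => sub_le_sub_right (hf hab) _
  have hmain : Sb W f' z false * Sb W (fun _ => 1) z true
      ≤ Sb W (fun _ => 1) z false * Sb W f' z true := by
    have h4 := four_functions_theorem_univ
      (f₁ := fun c => Wres W z false c * f' c) (f₂ := Wres W z true)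
      (f₃ := Wres W z false) (f₄ := fun c => Wres W z true c * f' c)
      (fun c => mul_nonneg (Wres_nonneg W hW z false c) (hf'0 c))
      (fun c => Wres_nonneg W hW z true c)
      (fun c => Wres_nonneg W hW z false c)
      (fun c => mul_nonneg (Wres_nonneg W hW z true c) (hf'0 c))
      (fun a b => ?_)
    · have e1 : ∑ c, Wres W z false c * f' c = Sb W f' z false := by
        rw [Sb_eq_SW_Wres]; unfold SW; exact Finset.sum_congr rfl fun c _ => rfl
      have e2 : ∑ c, Wres W z true c = Sb W (fun _ => 1) z true := by
        rw [Sb_eq_SW_Wres]; unfold SW; exact Finset.sum_congr rfl fun c _ => by ring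
      have e3 : ∑ c, Wres W z false c = Sb W (fun _ => 1) z false := by
        rw [Sb_eq_SW_Wres]; unfold SW; exact Finset.sum_congr rfl fun c _ => by ring
      have e4 : ∑ c, Wres W z true c * f' c = Sb W f' z true := by
        rw [Sb_eq_SW_Wres]; unfold SW; exact Finset.sum_congr rfl fun c _ => rfl
      rw [e1, e2, e3, e4] at h4
      exact h4
    · by_cases ha : a z = false
      · by_cases hb : b z = true
        · have hinf : (a ⊓ b) z = false := by
            have h' : (a ⊓ b) z = a z ⊓ b z := rfl
            rw [h', ha, hb]; rfl
          have hsup : (a ⊔ b) z = true := by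
            have h' : (a ⊔ b) z = a z ⊔ b z := rfl
            rw [h', ha, hb]; rfl
          unfold Wres
          simp only [if_pos ha, if_pos hb, if_pos hinf, if_pos hsup]
          have h1 : W a * f' a * W b = (W a * W b) * f' a := by ring
          have h2 : W (a ⊓ b) * (W (a ⊔ b) * f' (a ⊔ b)) = (W (a ⊓ b) * W (a ⊔ b)) * f' (a ⊔ b) := by
            ring
          rw [h1, h2]
          exact mul_le_mul (hls a b) (hf'mono le_sup_left)
            (hf'0 a) (le_trans (mul_nonneg (hW a) (hW b)) (hls a b))
        · have hz : Wres W z true b = 0 := by unfold Wres; rw [if_neg hb]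
          rw [hz, mul_zero]
          exact mul_nonneg (Wres_nonneg W hW z false _)
            (mul_nonneg (Wres_nonneg W hW z true _) (hf'0 _))
      · have hz : Wres W z false a * f' a = 0 := by unfold Wres; rw [if_neg ha, zero_mul]
        simp only [hz, zero_mul]
        exact mul_nonneg (Wres_nonneg W hW z false _)
          (mul_nonneg (Wres_nonneg W hW z true _) (hf'0 _))
  have hs1 : Sb W f z true = Sb W f' z true + f ⊥ * Sb W (fun _ => 1) z true := by
    have := Sb_shift W f' z true (f ⊥)
    simp only [hf'def, sub_add_cancel] at this
    exact this
  have hs2 : Sb W f z false = Sb W f' z false + f ⊥ * Sb W (fun _ => 1) z false := by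
    have := Sb_shift W f' z false (f ⊥)
    simp only [hf'def, sub_add_cancel] at this
    exact this
  rw [hs1, hs2]
  nlinarith [hmain]


/-- the scalar inequality behind the per-site derivative bound -/
lemma key_scalar (a b u₁ u₂ v₁ v₂ m₁ m₂ : ℝ) (ha : 0 < a) (hb : 0 < b)
    (hCp : 0 ≤ m₁ * a - u₁ * v₁) (hCm : 0 ≤ m₂ * b - u₂ * v₂)
    (hDf : 0 ≤ u₁ * b - u₂ * a) (hDg : 0 ≤ v₁ * b - v₂ * a) :
    |(a + b) ^ 2 * (m₁ - m₂)
        - (a + b) * ((u₁ + u₂) * (v₁ - v₂) + (v₁ + v₂) * (u₁ - u₂) + (a - b) * (m₁ + m₂))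
        + 2 * (u₁ + u₂) * (v₁ + v₂) * (a - b)|
      ≤ 2 * (a + b) * ((m₁ + m₂) * (a + b) - (u₁ + u₂) * (v₁ + v₂)) := by
  set TU := (a + b) ^ 2 * (m₁ - m₂)
      - (a + b) * ((u₁ + u₂) * (v₁ - v₂) + (v₁ + v₂) * (u₁ - u₂) + (a - b) * (m₁ + m₂))
      + 2 * (u₁ + u₂) * (v₁ + v₂) * (a - b) with hTU
  set cov := (m₁ + m₂) * (a + b) - (u₁ + u₂) * (v₁ + v₂) with hcov
  have hid1 : (2 * (a + b) * cov - TU) * (a * b)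
      = 2 * (a + b) * a * b * (m₁ * a - u₁ * v₁) + 2 * (a + b) * a * (2 * a + b) * (m₂ * b - u₂ * v₂)
        + 4 * a * ((u₁ * b - u₂ * a) * (v₁ * b - v₂ * a)) := by
    rw [hTU, hcov]; ring
  have hid2 : (2 * (a + b) * cov + TU) * (a * b)
      = 2 * (a + b) * b * (a + 2 * b) * (m₁ * a - u₁ * v₁) + 2 * (a + b) * a * b * (m₂ * b - u₂ * v₂)
        + 4 * b * ((u₁ * b - u₂ * a) * (v₁ * b - v₂ * a)) := by
    rw [hTU, hcov]; ring
  have hab : 0 < a * b := mul_pos ha hb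
  have hZ : 0 < a + b := by linarith
  have h1 : 0 ≤ 2 * (a + b) * cov - TU := by
    have hR : 0 ≤ (2 * (a + b) * cov - TU) * (a * b) := by
      rw [hid1]
      have := mul_nonneg hDf hDg
      positivity
    nlinarith [hR, hab]
  have h2 : 0 ≤ 2 * (a + b) * cov + TU := by
    have hR : 0 ≤ (2 * (a + b) * cov + TU) * (a * b) := by
      rw [hid2]
      have := mul_nonneg hDf hDg
      positivity
    nlinarith [hR, hab]
  rw [abs_le]
  constructor <;> linarith


/-- `Z³` times the derivative in `h_z` of the covariance -/
noncomputable def TU (W f g : (ι → Bool) → ℝ) (z : ι) : ℝ :=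
  SW W (fun _ => 1) ^ 2 * SW W (fun c => f c * g c * (if c z then (1:ℝ) else -1))
    - SW W (fun _ => 1) *
      (SW W f * SW W (fun c => g c * (if c z then (1:ℝ) else -1))
        + SW W g * SW W (fun c => f c * (if c z then (1:ℝ) else -1))
        + SW W (fun c => (1:ℝ) * (if c z then (1:ℝ) else -1)) * SW W (fun c => f c * g c))
    + 2 * SW W f * SW W g * SW W (fun c => (1:ℝ) * (if c z then (1:ℝ) else -1))

lemma TU_abs_le (W f g : (ι → Bool) → ℝ) (hW : ∀ c, 0 < W c)
    (hls : ∀ a b : ι → Bool, W a * W b ≤ W (a ⊓ b) * W (a ⊔ b))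
    (hf : Monotone f) (hg : Monotone g) (z : ι) :
    |TU W f g z| ≤ 2 * SW W (fun _ => 1) * covU W f g := by
  classical
  have hW0 : ∀ c, 0 ≤ W c := fun c => le_of_lt (hW c)
  set a := Sb W (fun _ => 1) z true with hadef
  set b := Sb W (fun _ => 1) z false with hbdef
  set u₁ := Sb W f z true with hu1
  set u₂ := Sb W f z false with hu2
  set v₁ := Sb W g z true with hv1
  set v₂ := Sb W g z false with hv2
  set m₁ := Sb W (fun c => f c * g c) z true with hm1
  set m₂ := Sb W (fun c => f c * g c) z false with hm2
  have ha : 0 < a := Sb_pos W hW z true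
  have hb : 0 < b := Sb_pos W hW z false
  have hCp : 0 ≤ m₁ * a - u₁ * v₁ := by
    have h := covU_nonneg (Wres W z true) f g (Wres_nonneg W hW0 z true)
      (Wres_ls W hW0 hls z true) hf hg
    unfold covU at h
    rw [← Sb_eq_SW_Wres, ← Sb_eq_SW_Wres, ← Sb_eq_SW_Wres, ← Sb_eq_SW_Wres] at h
    linarith [h]
  have hCm : 0 ≤ m₂ * b - u₂ * v₂ := by
    have h := covU_nonneg (Wres W z false) f g (Wres_nonneg W hW0 z false)
      (Wres_ls W hW0 hls z false) hf hg
    unfold covU at h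
    rw [← Sb_eq_SW_Wres, ← Sb_eq_SW_Wres, ← Sb_eq_SW_Wres, ← Sb_eq_SW_Wres] at h
    linarith [h]
  have hDf : 0 ≤ u₁ * b - u₂ * a := holley_mono W f hW0 hls hf z
  have hDg : 0 ≤ v₁ * b - v₂ * a := holley_mono W g hW0 hls hg z
  have e0 : SW W (fun _ => 1) = a + b := SW_split W _ z
  have ef : SW W f = u₁ + u₂ := SW_split W f z
  have eg : SW W g = v₁ + v₂ := SW_split W g z
  have efg : SW W (fun c => f c * g c) = m₁ + m₂ := SW_split W _ z
  have edfg : SW W (fun c => f c * g c * (if c z then (1:ℝ) else -1)) = m₁ - m₂ :=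
    SW_delta W (fun c => f c * g c) z
  have edg : SW W (fun c => g c * (if c z then (1:ℝ) else -1)) = v₁ - v₂ := SW_delta W g z
  have edf : SW W (fun c => f c * (if c z then (1:ℝ) else -1)) = u₁ - u₂ := SW_delta W f z
  have ed : SW W (fun c => (1:ℝ) * (if c z then (1:ℝ) else -1)) = a - b :=
    SW_delta W (fun _ => 1) z
  unfold TU covU
  rw [e0, ef, eg, efg, edfg, edg, edf, ed]
  exact key_scalar a b u₁ u₂ v₁ v₂ m₁ m₂ ha hb hCp hCm hDf hDg


/-- Grönwall-type comparison from a pointwise derivative bound. -/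
lemma gronwall_pm (F Fd : ℝ → ℝ) (K : ℝ)
    (hderiv : ∀ τ, HasDerivAt F (Fd τ) τ) (hbd : ∀ τ, |Fd τ| ≤ K * F τ) (t : ℝ) :
    Real.exp (-(K * |t|)) * F 0 ≤ F t ∧ F t ≤ Real.exp (K * |t|) * F 0 := by
  have hG : ∀ τ, HasDerivAt (fun τ => F τ * Real.exp (K * τ))
      ((Fd τ + K * F τ) * Real.exp (K * τ)) τ := by
    intro τ
    have he : HasDerivAt (fun τ => Real.exp (K * τ)) (Real.exp (K * τ) * K) τ := by
      have := ((hasDerivAt_id τ).const_mul K).exp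
      simpa using this
    have := (hderiv τ).fun_mul he
    exact this.congr_deriv (by ring)
  have hH : ∀ τ, HasDerivAt (fun τ => F τ * Real.exp (-K * τ))
      ((Fd τ - K * F τ) * Real.exp (-K * τ)) τ := by
    intro τ
    have he : HasDerivAt (fun τ => Real.exp (-K * τ)) (Real.exp (-K * τ) * (-K)) τ := by
      have := ((hasDerivAt_id τ).const_mul (-K)).exp
      simpa using this
    have := (hderiv τ).fun_mul he
    exact this.congr_deriv (by ring)
  have hGmono : Monotone (fun τ => F τ * Real.exp (K * τ)) := by
    refine monotone_of_deriv_nonneg (fun τ => (hG τ).differentiableAt) (fun τ => ?_)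
    rw [(hG τ).deriv]
    have h1 := (abs_le.mp (hbd τ)).1
    have h2 := Real.exp_pos (K * τ)
    nlinarith
  have hHanti : Antitone (fun τ => F τ * Real.exp (-K * τ)) := by
    refine antitone_of_deriv_nonpos (fun τ => (hH τ).differentiableAt) (fun τ => ?_)
    rw [(hH τ).deriv]
    have h1 := (abs_le.mp (hbd τ)).2
    have h2 := Real.exp_pos (-K * τ)
    nlinarith
  rcases le_or_gt 0 t with ht | ht
  · rw [abs_of_nonneg ht]
    constructor
    · have h := hGmono ht
      simp only [mul_zero, Real.exp_zero, mul_one] at h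
      have h2 := mul_le_mul_of_nonneg_right h (le_of_lt (Real.exp_pos (-(K * t))))
      rw [mul_assoc, ← Real.exp_add] at h2
      simp only [add_neg_cancel, Real.exp_zero, mul_one] at h2
      calc Real.exp (-(K * t)) * F 0 = F 0 * Real.exp (-(K * t)) := by ring
        _ ≤ F t := h2
    · have h := hHanti ht
      simp only [mul_zero, Real.exp_zero, mul_one] at h
      have h2 := mul_le_mul_of_nonneg_right h (le_of_lt (Real.exp_pos (K * t)))
      rw [mul_assoc, ← Real.exp_add] at h2
      have he : -K * t + K * t = 0 := by ring
      rw [he, Real.exp_zero, mul_one] at h2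
      calc F t ≤ F 0 * Real.exp (K * t) := h2
        _ = Real.exp (K * t) * F 0 := by ring
  · rw [abs_of_neg ht]
    constructor
    · have h := hHanti (le_of_lt ht)
      simp only [mul_zero, Real.exp_zero, mul_one] at h
      have h2 := mul_le_mul_of_nonneg_right h (le_of_lt (Real.exp_pos (K * t)))
      rw [mul_assoc, ← Real.exp_add] at h2
      have he : -K * t + K * t = 0 := by ring
      rw [he, Real.exp_zero, mul_one] at h2
      calc Real.exp (-(K * -t)) * F 0 = F 0 * Real.exp (K * t) := by
            rw [show -(K * -t) = K * t by ring]; ring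
        _ ≤ F t := h2
    · have h := hGmono (le_of_lt ht)
      simp only [mul_zero, Real.exp_zero, mul_one] at h
      have h2 := mul_le_mul_of_nonneg_right h (le_of_lt (Real.exp_pos (-(K * t))))
      rw [mul_assoc, ← Real.exp_add] at h2
      simp only [add_neg_cancel, Real.exp_zero, mul_one] at h2
      calc F t ≤ F 0 * Real.exp (-(K * t)) := h2
        _ = Real.exp (K * -t) * F 0 := by rw [show K * -t = -(K * t) by ring]; ring


noncomputable def Wt (W0 s : (ι → Bool) → ℝ) (τ : ℝ) : (ι → Bool) → ℝ :=
  fun c => W0 c * Real.exp (τ * s c)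

noncomputable def sD (D : Finset ι) : (ι → Bool) → ℝ :=
  fun c => ∑ z ∈ D, (if c z then (1:ℝ) else -1)

lemma sD_monotone (D : Finset ι) : Monotone (sD D) := by
  intro c d hcd
  refine Finset.sum_le_sum fun z _ => ?_
  have hz := hcd z
  cases hc : c z
  · cases hd : d z <;> simp [hc, hd]
  · cases hd : d z
    · rw [hc, hd] at hz
      exact absurd hz (by simp)
    · simp [hc, hd]

lemma Wt_pos (W0 s : (ι → Bool) → ℝ) (hW : ∀ c, 0 < W0 c) (τ : ℝ) :
    ∀ c, 0 < Wt W0 s τ c := fun c => mul_pos (hW c) (Real.exp_pos _)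

lemma sD_modular (D : Finset ι) (a b : ι → Bool) :
    sD D (a ⊓ b) + sD D (a ⊔ b) = sD D a + sD D b := by
  unfold sD
  rw [← Finset.sum_add_distrib, ← Finset.sum_add_distrib]
  refine Finset.sum_congr rfl fun z _ => ?_
  have hinf : (a ⊓ b) z = a z ⊓ b z := rfl
  have hsup : (a ⊔ b) z = a z ⊔ b z := rfl
  rw [hinf, hsup]
  cases ha : a z <;> cases hb : b z <;> simp

lemma Wt_ls (W0 : (ι → Bool) → ℝ) (D : Finset ι) (hW : ∀ c, 0 < W0 c)
    (hls : ∀ a b : ι → Bool, W0 a * W0 b ≤ W0 (a ⊓ b) * W0 (a ⊔ b)) (τ : ℝ) :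
    ∀ a b : ι → Bool, Wt W0 (sD D) τ a * Wt W0 (sD D) τ b
      ≤ Wt W0 (sD D) τ (a ⊓ b) * Wt W0 (sD D) τ (a ⊔ b) := by
  intro a b
  unfold Wt
  have he : Real.exp (τ * sD D a) * Real.exp (τ * sD D b)
      = Real.exp (τ * sD D (a ⊓ b)) * Real.exp (τ * sD D (a ⊔ b)) := by
    rw [← Real.exp_add, ← Real.exp_add]
    congr 1
    have := sD_modular D a b
    linear_combination (-τ) * this
  calc W0 a * Real.exp (τ * sD D a) * (W0 b * Real.exp (τ * sD D b))
      = W0 a * W0 b * (Real.exp (τ * sD D a) * Real.exp (τ * sD D b)) := by ring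
    _ ≤ W0 (a ⊓ b) * W0 (a ⊔ b) * (Real.exp (τ * sD D a) * Real.exp (τ * sD D b)) := by
        apply mul_le_mul_of_nonneg_right (hls a b)
        positivity
    _ = W0 (a ⊓ b) * Real.exp (τ * sD D (a ⊓ b)) * (W0 (a ⊔ b) * Real.exp (τ * sD D (a ⊔ b))) := by
        rw [he]; ring

lemma hasDerivAt_SW_Wt (W0 s f : (ι → Bool) → ℝ) (τ : ℝ) :
    HasDerivAt (fun τ => SW (Wt W0 s τ) f) (SW (Wt W0 s τ) (fun c => f c * s c)) τ := by
  have h : ∀ c : ι → Bool, HasDerivAt (fun τ => Wt W0 s τ c * f c)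
      (Wt W0 s τ c * (f c * s c)) τ := by
    intro c
    have h1 : HasDerivAt (fun τ : ℝ => τ * s c) (s c) τ := hasDerivAt_mul_const (s c)
    have h2 := h1.exp
    have h3 := (h2.const_mul (W0 c)).mul_const (f c)
    unfold Wt
    exact h3.congr_deriv (by ring)
  have := HasDerivAt.fun_sum (fun c (_ : c ∈ Finset.univ) => h c)
  unfold SW
  exact this

lemma SW_one_pos (W : (ι → Bool) → ℝ) (hW : ∀ c, 0 < W c) :
    0 < SW W (fun _ => 1) := by
  unfold SW
  refine Finset.sum_pos (fun c _ => by simpa using hW c) Finset.univ_nonempty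

lemma SW_sum_delta (W φ : (ι → Bool) → ℝ) (D : Finset ι) :
    ∑ z ∈ D, SW W (fun c => φ c * (if c z then (1:ℝ) else -1))
      = SW W (fun c => φ c * sD D c) := by
  unfold SW sD
  rw [Finset.sum_comm]
  refine Finset.sum_congr rfl fun c _ => ?_
  rw [← Finset.sum_congr rfl fun z (_ : z ∈ D) => rfl]
  rw [← Finset.mul_sum]
  congr 1
  rw [← Finset.mul_sum]


/-- normalized covariance of `sD D` and `g` at tilt `τ` -/
noncomputable def Fc (W0 : (ι → Bool) → ℝ) (D : Finset ι) (g : (ι → Bool) → ℝ) : ℝ → ℝ :=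
  fun τ => covU (Wt W0 (sD D) τ) (sD D) g / SW (Wt W0 (sD D) τ) (fun _ => 1) ^ 2

theorem abstract_comparison (W0 : (ι → Bool) → ℝ) (hW : ∀ c, 0 < W0 c)
    (hls : ∀ a b : ι → Bool, W0 a * W0 b ≤ W0 (a ⊓ b) * W0 (a ⊔ b))
    (D : Finset ι) (g : (ι → Bool) → ℝ) (hg : Monotone g) (K : ℝ)
    (hK : 2 * (D.card : ℝ) ≤ K) (t : ℝ) :
    Real.exp (-(K * |t|)) * Fc W0 D g 0 ≤ Fc W0 D g t ∧
      Fc W0 D g t ≤ Real.exp (K * |t|) * Fc W0 D g 0 := by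
  classical
  set s : (ι → Bool) → ℝ := sD D with hsdef
  have hZpos : ∀ τ, 0 < SW (Wt W0 s τ) (fun _ => 1) :=
    fun τ => SW_one_pos _ (Wt_pos W0 s hW τ)
  set Fd : ℝ → ℝ := fun τ =>
    ((SW (Wt W0 s τ) (fun c => s c * g c * s c) * SW (Wt W0 s τ) (fun _ => 1)
        + SW (Wt W0 s τ) (fun c => s c * g c) * SW (Wt W0 s τ) (fun c => (1:ℝ) * s c)
        - (SW (Wt W0 s τ) (fun c => s c * s c) * SW (Wt W0 s τ) g
          + SW (Wt W0 s τ) s * SW (Wt W0 s τ) (fun c => g c * s c)))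
        * SW (Wt W0 s τ) (fun _ => 1) ^ 2
      - (SW (Wt W0 s τ) (fun c => s c * g c) * SW (Wt W0 s τ) (fun _ => 1)
          - SW (Wt W0 s τ) s * SW (Wt W0 s τ) g)
        * (2 * SW (Wt W0 s τ) (fun _ => 1) ^ 1 * SW (Wt W0 s τ) (fun c => (1:ℝ) * s c)))
      / (SW (Wt W0 s τ) (fun _ => 1) ^ 2) ^ 2 with hFddef
  have hderiv : ∀ τ, HasDerivAt (Fc W0 D g) (Fd τ) τ := by
    intro τ
    have hP := hasDerivAt_SW_Wt W0 s (fun c => s c * g c) τ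
    have hQ := hasDerivAt_SW_Wt W0 s s τ
    have hR := hasDerivAt_SW_Wt W0 s g τ
    have hZ := hasDerivAt_SW_Wt W0 s (fun _ => 1) τ
    have hN := (hP.mul hZ).sub (hQ.mul hR)
    have hDen := hZ.pow 2
    have hdiv := hN.div hDen (pow_ne_zero 2 (ne_of_gt (hZpos τ)))
    exact hdiv
  have hbd : ∀ τ, |Fd τ| ≤ K * Fc W0 D g τ := by
    intro τ
    set W : (ι → Bool) → ℝ := Wt W0 s τ with hWdef
    have hWpos : ∀ c, 0 < W c := Wt_pos W0 s hW τ
    have hWls : ∀ a b : ι → Bool, W a * W b ≤ W (a ⊓ b) * W (a ⊔ b) := Wt_ls W0 D hW hls τ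
    have hsmono : Monotone s := sD_monotone D
    have hZ : 0 < SW W (fun _ => 1) := hZpos τ
    have hcov : 0 ≤ covU W s g := covU_nonneg W s g (fun c => le_of_lt (hWpos c)) hWls hsmono hg
    -- the sum of the per-site numerators
    have htsum : ∑ z ∈ D, TU W s g z
        = SW W (fun _ => 1) ^ 2 * SW W (fun c => s c * g c * s c)
          - SW W (fun _ => 1) *
            (SW W s * SW W (fun c => g c * s c) + SW W g * SW W (fun c => s c * s c)
              + SW W (fun c => (1:ℝ) * s c) * SW W (fun c => s c * g c))
          + 2 * SW W s * SW W g * SW W (fun c => (1:ℝ) * s c) := by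
      unfold TU
      have h1 : (∑ z ∈ D, SW W (fun _ => 1) ^ 2
            * SW W (fun c => s c * g c * (if c z then (1:ℝ) else -1)))
          = SW W (fun _ => 1) ^ 2 * SW W (fun c => s c * g c * s c) := by
        rw [← Finset.mul_sum, SW_sum_delta W (fun c => s c * g c) D]
      have h2 : (∑ z ∈ D, SW W (fun _ => 1) *
          (SW W s * SW W (fun c => g c * (if c z then (1:ℝ) else -1))
            + SW W g * SW W (fun c => s c * (if c z then (1:ℝ) else -1))
            + SW W (fun c => (1:ℝ) * (if c z then (1:ℝ) else -1)) * SW W (fun c => s c * g c)))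
          = SW W (fun _ => 1) *
            (SW W s * SW W (fun c => g c * s c) + SW W g * SW W (fun c => s c * s c)
              + SW W (fun c => (1:ℝ) * s c) * SW W (fun c => s c * g c)) := by
        rw [← Finset.mul_sum]
        congr 1
        rw [Finset.sum_add_distrib, Finset.sum_add_distrib,
          ← Finset.mul_sum, ← Finset.mul_sum, ← Finset.sum_mul,
          SW_sum_delta W g D, SW_sum_delta W s D, SW_sum_delta W (fun _ => (1:ℝ)) D]
      have h3 : (∑ z ∈ D,
            2 * SW W s * SW W g * SW W (fun c => (1:ℝ) * (if c z then (1:ℝ) else -1)))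
          = 2 * SW W s * SW W g * SW W (fun c => (1:ℝ) * s c) := by
        rw [← Finset.mul_sum, SW_sum_delta W (fun _ => (1:ℝ)) D]
      rw [Finset.sum_add_distrib, Finset.sum_sub_distrib, h1, h2, h3]
    have hFdS : Fd τ = (∑ z ∈ D, TU W s g z) / SW W (fun _ => 1) ^ 3 := by
      rw [htsum, hFddef]
      simp only [← hWdef]
      have hZne : SW W (fun _ => 1) ≠ 0 := ne_of_gt hZ
      field_simp
      ring
    have hTUsum : |∑ z ∈ D, TU W s g z| ≤ (D.card : ℝ) * (2 * SW W (fun _ => 1) * covU W s g) := by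
      calc |∑ z ∈ D, TU W s g z| ≤ ∑ z ∈ D, |TU W s g z| := Finset.abs_sum_le_sum_abs _ _
        _ ≤ ∑ z ∈ D, 2 * SW W (fun _ => 1) * covU W s g :=
            Finset.sum_le_sum fun z _ => TU_abs_le W s g hWpos hWls hsmono hg z
        _ = (D.card : ℝ) * (2 * SW W (fun _ => 1) * covU W s g) := by
            rw [Finset.sum_const, nsmul_eq_mul]
    have hFcval : Fc W0 D g τ = covU W s g / SW W (fun _ => 1) ^ 2 := rfl
    rw [hFdS, hFcval, abs_div, abs_of_pos (by positivity : (0:ℝ) < SW W (fun _ => 1) ^ 3)]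
    rw [div_le_iff₀ (by positivity : (0:ℝ) < SW W (fun _ => 1) ^ 3)]
    have hexp : K * (covU W s g / SW W (fun _ => 1) ^ 2) * SW W (fun _ => 1) ^ 3
        = (K * covU W s g) * SW W (fun _ => 1) := by
      field_simp
    rw [hexp]
    calc |∑ z ∈ D, TU W s g z| ≤ (D.card : ℝ) * (2 * SW W (fun _ => 1) * covU W s g) := hTUsum
      _ = (2 * (D.card : ℝ) * covU W s g) * SW W (fun _ => 1) := by ring
      _ ≤ (K * covU W s g) * SW W (fun _ => 1) := by
          apply mul_le_mul_of_nonneg_right _ (le_of_lt hZ)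
          exact mul_le_mul_of_nonneg_right hK hcov
  exact gronwall_pm (Fc W0 D g) Fd K hderiv hbd t

end Abstract


section Concrete

lemma zpart_pos (Λ : Finset V) (β : ℝ) (η : V → ℤ) (J : V → ℝ) :
    0 < Zpart Λ β η J := by
  unfold Zpart
  exact Finset.sum_pos (fun c _ => Real.exp_pos _) Finset.univ_nonempty

lemma extend_inf (Λ : Finset V) (c d : Λ → Bool) (v : V) :
    extend Λ (c ⊓ d) v = (extend Λ c v && extend Λ d v) := by
  unfold extend
  by_cases hv : v ∈ Λ
  · rw [dif_pos hv, dif_pos hv, dif_pos hv]; rfl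
  · rw [dif_neg hv, dif_neg hv, dif_neg hv]; rfl

lemma extend_sup (Λ : Finset V) (c d : Λ → Bool) (v : V) :
    extend Λ (c ⊔ d) v = (extend Λ c v || extend Λ d v) := by
  unfold extend
  by_cases hv : v ∈ Λ
  · rw [dif_pos hv, dif_pos hv, dif_pos hv]; rfl
  · rw [dif_neg hv, dif_neg hv, dif_neg hv]; rfl

lemma energy_zero_bc (Λ : Finset V) (β : ℝ) (J : V → ℝ) (σ : Config) :
    energy Λ β (fun _ => 0) J σ
      = β * ((∑ x ∈ Λ, ∑ y ∈ Λ, if adj x y then spin σ x * spin σ y else 0) / 2)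
        + ∑ x ∈ Λ, J x * spin σ x := by
  unfold energy
  simp

lemma spin_pair_superadd (σ τ : Config) (u v : V) :
    spin σ u * spin σ v + spin τ u * spin τ v
      ≤ spin (fun w => σ w && τ w) u * spin (fun w => σ w && τ w) v
        + spin (fun w => σ w || τ w) u * spin (fun w => σ w || τ w) v := by
  unfold spin
  cases hσu : σ u <;> cases hτu : τ u <;> cases hσv : σ v <;> cases hτv : τ v <;>
    simp [hσu, hτu, hσv, hτv] <;> norm_num

lemma spin_field_add (σ τ : Config) (u : V) :
    spin (fun w => σ w && τ w) u + spin (fun w => σ w || τ w) u = spin σ u + spin τ u := by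
  unfold spin
  cases hσu : σ u <;> cases hτu : τ u <;> simp [hσu, hτu] <;> norm_num

lemma energy_superadd (Λ : Finset V) (β : ℝ) (hβ : 0 ≤ β) (J : V → ℝ)
    (c d : Λ → Bool) :
    energy Λ β (fun _ => 0) J (extend Λ c) + energy Λ β (fun _ => 0) J (extend Λ d)
      ≤ energy Λ β (fun _ => 0) J (extend Λ (c ⊓ d))
        + energy Λ β (fun _ => 0) J (extend Λ (c ⊔ d)) := by
  set σ := extend Λ c with hσ
  set τ := extend Λ d with hτ
  have hinf : extend Λ (c ⊓ d) = fun w => σ w && τ w := funext fun v => extend_inf Λ c d v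
  have hsup : extend Λ (c ⊔ d) = fun w => σ w || τ w := funext fun v => extend_sup Λ c d v
  rw [hinf, hsup, energy_zero_bc, energy_zero_bc, energy_zero_bc, energy_zero_bc]
  have hpair : (∑ x ∈ Λ, ∑ y ∈ Λ, if adj x y then spin σ x * spin σ y else 0)
      + (∑ x ∈ Λ, ∑ y ∈ Λ, if adj x y then spin τ x * spin τ y else 0)
      ≤ (∑ x ∈ Λ, ∑ y ∈ Λ, if adj x y then spin (fun w => σ w && τ w) x
            * spin (fun w => σ w && τ w) y else 0)
        + (∑ x ∈ Λ, ∑ y ∈ Λ, if adj x y then spin (fun w => σ w || τ w) x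
            * spin (fun w => σ w || τ w) y else 0) := by
    rw [← Finset.sum_add_distrib, ← Finset.sum_add_distrib]
    refine Finset.sum_le_sum fun u _ => ?_
    rw [← Finset.sum_add_distrib, ← Finset.sum_add_distrib]
    refine Finset.sum_le_sum fun v _ => ?_
    by_cases hadj : adj u v
    · simp only [if_pos hadj]
      exact spin_pair_superadd σ τ u v
    · simp only [if_neg hadj, add_zero]
      exact le_rfl
  have hfield : (∑ x ∈ Λ, J x * spin (fun w => σ w && τ w) x)
      + (∑ x ∈ Λ, J x * spin (fun w => σ w || τ w) x)
      = (∑ x ∈ Λ, J x * spin σ x) + (∑ x ∈ Λ, J x * spin τ x) := by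
    rw [← Finset.sum_add_distrib, ← Finset.sum_add_distrib]
    refine Finset.sum_congr rfl fun u _ => ?_
    have := spin_field_add σ τ u
    linear_combination (J u) * this
  nlinarith [mul_nonneg hβ (sub_nonneg.mpr hpair)]

end Concrete


section Concrete2

lemma sum_fintype_congr {α : Type*} {F1 F2 : Fintype α} (f g : α → ℝ) (h : ∀ c, f c = g c) :
    @Finset.sum α ℝ _ (@Finset.univ α F1) f = @Finset.sum α ℝ _ (@Finset.univ α F2) g := by
  cases Subsingleton.elim F1 F2
  exact Finset.sum_congr rfl fun c _ => h c

lemma covar_eq_covU (Λ : Finset V) (β : ℝ) (η : V → ℤ) (J : V → ℝ) (f g : Config → ℝ) :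
    covar Λ β η J f g
      = covU (fun c : Λ → Bool => weight Λ β η J (extend Λ c))
          (fun c => f (extend Λ c)) (fun c => g (extend Λ c))
        / SW (fun c : Λ → Bool => weight Λ β η J (extend Λ c)) (fun _ => 1) ^ 2 := by
  have hZ : Zpart Λ β η J
      = SW (fun c : Λ → Bool => weight Λ β η J (extend Λ c)) (fun _ => 1) := by
    unfold Zpart SW
    exact sum_fintype_congr _ _ fun c => by ring
  have hnum : ∀ F : Config → ℝ,
      (∑ c : Λ → Bool, F (extend Λ c) * weight Λ β η J (extend Λ c))
        = SW (fun c : Λ → Bool => weight Λ β η J (extend Λ c))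
            (fun c => F (extend Λ c)) := by
    intro F
    unfold SW
    exact sum_fintype_congr _ _ fun c => by ring
  have hZpos := zpart_pos Λ β η J
  rw [hZ] at hZpos
  unfold covar expec covU
  rw [hnum (fun σ => f σ * g σ), hnum f, hnum g, ← hZ]
  rw [hZ]
  field_simp

lemma covar_sum_spin (Λ : Finset V) (β : ℝ) (η : V → ℤ) (J : V → ℝ) (G : Config → ℝ)
    (T : Finset V) :
    ∑ y ∈ T, covar Λ β η J (fun σ => spin σ y) G
      = covar Λ β η J (fun σ => ∑ y ∈ T, spin σ y) G := by
  unfold covar expec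
  rw [Finset.sum_sub_distrib]
  congr 1
  · rw [← Finset.sum_div]
    congr 1
    rw [Finset.sum_comm]
    refine Finset.sum_congr rfl fun c _ => ?_
    rw [← Finset.sum_mul, ← Finset.sum_mul]
  · rw [← Finset.sum_mul, ← Finset.sum_div]
    congr 2
    rw [Finset.sum_comm]
    refine Finset.sum_congr rfl fun c _ => ?_
    rw [← Finset.sum_mul]

lemma nbrs_translate (x u : V) : nbrs (x + u) = (nbrs u).image (fun w => x + w) := by
  unfold nbrs
  rw [Finset.image_image]
  congr 1
  funext d
  simp [Function.comp, add_assoc]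

lemma mem_image_add_iff (x : V) (T : Finset V) (v : V) :
    x + v ∈ T.image (fun w => x + w) ↔ v ∈ T := by
  constructor
  · intro hmem
    rcases Finset.mem_image.mp hmem with ⟨u, hu, huv⟩
    have : u = v := add_left_cancel huv
    rwa [← this]
  · intro hv
    exact Finset.mem_image_of_mem _ hv

lemma bdry_image_add (x : V) (T : Finset V) :
    bdry (T.image (fun w => x + w)) = (bdry T).image (fun w => x + w) := by
  unfold bdry
  ext w
  simp only [Finset.mem_filter, Finset.mem_image]
  constructor
  · rintro ⟨⟨u, hu, rfl⟩, ⟨y, hy, hyn⟩⟩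
    rw [nbrs_translate] at hy
    rcases Finset.mem_image.mp hy with ⟨d, hd, rfl⟩
    refine ⟨u, ⟨hu, ⟨d, hd, ?_⟩⟩, rfl⟩
    intro hdT
    exact hyn ⟨d, hdT, rfl⟩
  · rintro ⟨u, ⟨hu, ⟨d, hd, hdT⟩⟩, rfl⟩
    refine ⟨⟨u, hu, rfl⟩, ⟨x + d, ?_, ?_⟩⟩
    · rw [nbrs_translate]
      exact Finset.mem_image_of_mem _ hd
    · intro hmem
      rcases hmem with ⟨d', hd', hdd⟩
      have : d' = d := add_left_cancel hdd
      rw [this] at hd'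
      exact hdT hd'

lemma card_bdry_boxAt (m : ℕ) (x : V) :
    (bdry (boxAt m x)).card = (bdry (box m)).card := by
  unfold boxAt
  rw [bdry_image_add]
  exact Finset.card_image_of_injective _ (add_right_injective x)

end Concrete2

theorem statement5 (β : ℝ) (hβ0 : 0 ≤ β) (h : ℝ) (Λ : Finset V) (x : V) (hx : x ∈ Λ)
    (m : ℕ) (hm : 0 < m) (t : ℝ) (A : Set Config) (hInc : Increasing A)
    (hdep : DependsOn A ↑(Λ \ boxAt m x)) :
    Real.exp (-(4 * ((bdry (box m)).card : ℝ) * |t|)) *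
        (∑ y ∈ bdry (boxAt m x) ∩ Λ,
          covar Λ β (fun _ => 0) (fun _ => h) (fun σ => spin σ y) (ind A))
      ≤ (∑ y ∈ bdry (boxAt m x) ∩ Λ,
          covar Λ β (fun _ => 0) (gfield Λ m x h t) (fun σ => spin σ y) (ind A)) ∧
    (∑ y ∈ bdry (boxAt m x) ∩ Λ,
        covar Λ β (fun _ => 0) (gfield Λ m x h t) (fun σ => spin σ y) (ind A))
      ≤ Real.exp (4 * ((bdry (box m)).card : ℝ) * |t|) *
        (∑ y ∈ bdry (boxAt m x) ∩ Λ,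
          covar Λ β (fun _ => 0) (fun _ => h) (fun σ => spin σ y) (ind A)) := by
  classical
  set DV : Finset V := bdry (boxAt m x) ∩ Λ with hDVdef
  have hDsub : DV ⊆ Λ := Finset.inter_subset_right
  set D' : Finset ((Λ : Finset V) : Type) := Finset.univ.filter
    (fun z => (z : V) ∈ bdry (boxAt m x)) with hD'def
  set W0 : (Λ → Bool) → ℝ :=
    fun c => weight Λ β (fun _ => 0) (fun _ => h) (extend Λ c) with hW0def
  set gf : (Λ → Bool) → ℝ := fun c => ind A (extend Λ c) with hgfdef
  -- correspondence between the sum of spins over `DV` and the abstract `sD D'`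
  have hs_eq : ∀ c : Λ → Bool, (∑ y ∈ DV, spin (extend Λ c) y) = sD D' c := by
    intro c
    unfold sD
    refine Finset.sum_bij' (fun (y : V) (hy : y ∈ DV) => (⟨y, hDsub hy⟩ : (Λ : Finset V)))
      (fun (z : (Λ : Finset V)) (_ : z ∈ D') => (z : V)) ?_ ?_ ?_ ?_ ?_
    · intro y hy
      rw [hD'def, Finset.mem_filter]
      exact ⟨Finset.mem_univ _, (Finset.mem_inter.mp hy).1⟩
    · intro z hz
      rw [hD'def, Finset.mem_filter] at hz
      rw [hDVdef, Finset.mem_inter]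
      exact ⟨hz.2, z.2⟩
    · intro y hy
      rfl
    · intro z hz
      rfl
    · intro y hy
      unfold spin extend
      rw [dif_pos (hDsub hy)]
  -- the initial and tilted weights
  have hW0pos : ∀ c, 0 < W0 c := fun c => Real.exp_pos _
  have hW0ls : ∀ a b : Λ → Bool, W0 a * W0 b ≤ W0 (a ⊓ b) * W0 (a ⊔ b) := by
    intro a b
    rw [hW0def]
    unfold weight
    rw [← Real.exp_add, ← Real.exp_add]
    exact Real.exp_le_exp.mpr (energy_superadd Λ β hβ0 (fun _ => h) a b)
  have hWt0 : (fun c : Λ → Bool => weight Λ β (fun _ => 0) (fun _ => h) (extend Λ c))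
      = Wt W0 (sD D') 0 := by
    funext c
    unfold Wt
    rw [hW0def]
    simp
  have hWtt : (fun c : Λ → Bool => weight Λ β (fun _ => 0) (gfield Λ m x h t) (extend Λ c))
      = Wt W0 (sD D') t := by
    funext c
    unfold Wt
    rw [hW0def]
    unfold weight
    rw [← Real.exp_add]
    congr 1
    rw [energy_zero_bc, energy_zero_bc]
    have hterm : ∀ v, gfield Λ m x h t v * spin (extend Λ c) v
        = h * spin (extend Λ c) v + (if v ∈ DV then t * spin (extend Λ c) v else 0) := by
      intro v
      by_cases hv : v ∈ bdry (boxAt m x) ∩ Λ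
      · rw [hDVdef, if_pos hv]
        unfold gfield
        rw [if_pos hv]
        ring
      · rw [hDVdef, if_neg hv]
        unfold gfield
        rw [if_neg hv]
        ring
    have hfld : ∑ v ∈ Λ, gfield Λ m x h t v * spin (extend Λ c) v
        = (∑ v ∈ Λ, h * spin (extend Λ c) v) + t * ∑ y ∈ DV, spin (extend Λ c) y := by
      rw [Finset.sum_congr rfl (fun v _ => hterm v), Finset.sum_add_distrib]
      congr 1
      have hfilter : Λ.filter (fun v => v ∈ DV) = DV := by
        ext v
        simp only [Finset.mem_filter]
        exact ⟨fun hv => hv.2, fun hv => ⟨hDsub hv, hv⟩⟩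
      rw [← Finset.sum_filter, hfilter, Finset.mul_sum]
    rw [hfld, hs_eq c]
    ring
  -- monotonicity of the indicator
  have hgfmono : Monotone gf := by
    intro a b hab
    have hext : ∀ v, extend Λ a v ≤ extend Λ b v := by
      intro v
      unfold extend
      by_cases hv : v ∈ Λ
      · rw [dif_pos hv, dif_pos hv]
        exact hab ⟨v, hv⟩
      · rw [dif_neg hv, dif_neg hv]
    rw [hgfdef]
    unfold ind
    by_cases ha : extend Λ a ∈ A
    · have hb : extend Λ b ∈ A := hInc _ _ ha hext
      simp [ha, hb]
    · simp only [if_neg ha]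
      split <;> norm_num
  -- cardinality bound
  have hcardD : D'.card ≤ (bdry (box m)).card := by
    rw [← card_bdry_boxAt m x]
    refine Finset.card_le_card_of_injOn (f := fun z => (z : V)) ?_ ?_
    · intro z hz
      rw [Finset.mem_coe, hD'def, Finset.mem_filter] at hz
      exact hz.2
    · exact Subtype.coe_injective.injOn
  set K : ℝ := 4 * ((bdry (box m)).card : ℝ) with hKdef
  have hK : 2 * (D'.card : ℝ) ≤ K := by
    rw [hKdef]
    have h1 : (D'.card : ℝ) ≤ ((bdry (box m)).card : ℝ) := Nat.cast_le.mpr hcardD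
    have h2 : (0:ℝ) ≤ ((bdry (box m)).card : ℝ) := Nat.cast_nonneg _
    linarith
  -- the two sums of covariances as values of `Fc`
  have hF0 : (∑ y ∈ DV, covar Λ β (fun _ => 0) (fun _ => h) (fun σ => spin σ y) (ind A))
      = Fc W0 D' gf 0 := by
    rw [covar_sum_spin, covar_eq_covU]
    unfold Fc
    rw [hWt0]
    congr 1
    unfold covU
    congr 2
    · apply SW_congr
      intro c
      exact congrArg (fun r => r * gf c) (hs_eq c)
    · apply SW_congr
      intro c
      exact hs_eq c
  have hFt : (∑ y ∈ DV, covar Λ β (fun _ => 0) (gfield Λ m x h t) (fun σ => spin σ y) (ind A))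
      = Fc W0 D' gf t := by
    rw [covar_sum_spin, covar_eq_covU]
    unfold Fc
    rw [hWtt]
    congr 1
    unfold covU
    congr 2
    · apply SW_congr
      intro c
      exact congrArg (fun r => r * gf c) (hs_eq c)
    · apply SW_congr
      intro c
      exact hs_eq c
  obtain ⟨hlow, hhigh⟩ := abstract_comparison W0 hW0pos hW0ls D' gf hgfmono K hK t
  constructor
  · rw [hF0, hFt] at *
    exact hlow
  · rw [hF0, hFt] at *
    exact hhigh

end Ising
end

section
/- For every β ≥ 0, h ∈ ℝ, p ∈ (0,1), n ∈ ℕ and finite Λ ⊂ ℤ³ with B_n ⊂ Λ, the event H := {∃ LR +crossing in B_n ∩ S_1} satisfies: ∂μ_{Λ,p,h}(H)/∂p = Σ_{x∈Λ_{(1)}} Σ_{ω∈{0,1}^{Λ_{(1)}∖{x}}} p^{|ω^{−1}(1)|}(1−p)^{|ω^{−1}(0)|} P_{Λ,β,h}(x is +pivotal for H(x,ω)). -/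
open scoped BigOperators
open Classical Filter MeasureTheory

namespace Ising

/-! ### Auxiliary lemmas for statement8 -/

lemma crossing_increasing (n k : ℕ) : Increasing (crossing n k) := by
  rintro σ τ ⟨l, hc, hv, h1, h2⟩ hle
  refine ⟨l, hc, fun v hv' => ?_, h1, h2⟩
  obtain ⟨hb, hs, ht⟩ := hv v hv'
  refine ⟨hb, hs, ?_⟩
  have h := hle v
  rw [ht] at h
  exact le_antisymm (Bool.le_true _) h

lemma occursOn_mono (A : Set Config) {Δ Δ' : Set V} (h : Δ ⊆ Δ') :
    occursOn A Δ ⊆ occursOn A Δ' := by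
  intro σ hσ τ hτ
  exact hσ τ fun v hv => hτ v (h hv)

lemma prob_sdiff (Λ : Finset V) (β : ℝ) (η : V → ℤ) (J : V → ℝ) {A A' : Set Config}
    (hAA : A' ⊆ A) :
    prob Λ β η J A - prob Λ β η J A' = prob Λ β η J (A \ A') := by
  unfold prob
  rw [div_sub_div_same]
  congr 1
  rw [← Finset.sum_sub_distrib]
  refine Finset.sum_congr rfl fun σ _ => ?_
  by_cases hA : extend Λ σ ∈ A
  · by_cases hA' : extend Λ σ ∈ A'
    · have : extend Λ σ ∉ A \ A' := fun hm => hm.2 hA'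
      simp [hA, hA', this]
    · have : extend Λ σ ∈ A \ A' := ⟨hA, hA'⟩
      simp [hA, hA', this]
  · have hA' : extend Λ σ ∉ A' := fun hm => hA (hAA hm)
    have : extend Λ σ ∉ A \ A' := fun hm => hA hm.1
    simp [hA, hA', this]

lemma plusPivotal_occursOn {H : Set Config} (hH : Increasing H) {Δ₀ : Set V} {x : V}
    (hx : x ∉ Δ₀) :
    plusPivotal (occursOn H (Δ₀ ∪ {x})) x
      = occursOn H (Δ₀ ∪ {x}) \ occursOn H Δ₀ := by
  have force_le : ∀ τ : Config, ∀ v, forceOn τ {x} false v ≤ τ v := by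
    intro τ v
    by_cases hv : v = x
    · simp [forceOn, hv]
    · simp [forceOn, hv]
  ext σ
  constructor
  · rintro ⟨⟨hplus, hminus⟩, hσx⟩
    have hσx : σ x = true := hσx
    have hfix : forceOn σ ({x} : Set V) true = σ := by
      funext v
      by_cases hv : v = x
      · simp [forceOn, hv, hσx]
      · simp [forceOn, hv]
    refine ⟨by rw [hfix] at hplus; exact hplus, ?_⟩
    intro hA'
    apply hminus
    intro τ hτ
    apply hA'
    intro v hv
    have hne : v ≠ x := fun he => hx (he ▸ hv)
    have := hτ v (Or.inl hv)
    simpa [forceOn, hne] using this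
  · rintro ⟨hA, hA'⟩
    have hσx : σ x = true := by
      by_contra hfalse
      have hσxf : σ x = false := by
        cases hb : σ x
        · rfl
        · exact absurd hb hfalse
      apply hA'
      intro τ hτ
      have hτ' : forceOn τ ({x} : Set V) false ∈ H := by
        apply hA
        intro v hv
        rcases hv with hv | hv
        · have hne : v ≠ x := fun he => hx (he ▸ hv)
          simp [forceOn, hne, hτ v hv]
        · have hvx : v = x := hv
          subst hvx
          simp [forceOn, hσxf]
      exact hH _ _ hτ' (force_le τ)
    have hfix : forceOn σ ({x} : Set V) true = σ := by
      funext v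
      by_cases hv : v = x
      · simp [forceOn, hv, hσx]
      · simp [forceOn, hv]
    refine ⟨⟨by rw [hfix]; exact hA, ?_⟩, hσx⟩
    intro hmem
    apply hA'
    intro τ hτ
    have hτ' : forceOn τ ({x} : Set V) false ∈ H := by
      apply hmem
      intro v hv
      rcases hv with hv | hv
      · have hne : v ≠ x := fun he => hx (he ▸ hv)
        simp [forceOn, hne, hτ v hv]
      · have hvx : v = x := hv
        subst hvx
        simp [forceOn]
    exact hH _ _ hτ' (force_le τ)

/-- Gluing a configuration on `Δ \ {x}` with a value `b` at `x`. -/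
noncomputable def glue (Δ : Finset V) (x : V) (ω' : ↥(Δ \ {x} : Finset V) → Bool) (b : Bool) :
    ↥Δ → Bool :=
  fun v => if hvx : (v : V) = x then b
    else ω' ⟨v, Finset.mem_sdiff.mpr ⟨v.2, by simp [hvx]⟩⟩

noncomputable def glueEquiv (Δ : Finset V) (x : V) (hx : x ∈ Δ) :
    (↥Δ → Bool) ≃ (↥(Δ \ {x} : Finset V) → Bool) × Bool where
  toFun ω := (fun v => ω ⟨v, (Finset.mem_sdiff.mp v.2).1⟩, ω ⟨x, hx⟩)
  invFun z := glue Δ x z.1 z.2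
  left_inv ω := by
    funext v
    by_cases hvx : (v : V) = x
    · have hv : (⟨x, hx⟩ : ↥Δ) = v := Subtype.ext hvx.symm
      simp only [glue, dif_pos hvx, hv]
    · simp only [glue, dif_neg hvx]
  right_inv z := by
    obtain ⟨ω', b⟩ := z
    refine Prod.ext ?_ ?_
    · funext v
      have hvx : (v : V) ≠ x := by
        have := (Finset.mem_sdiff.mp v.2).2
        simpa using this
      simp only [glue, dif_neg hvx]
    · simp [glue]

lemma sum_glue (Δ : Finset V) (x : V) (hx : x ∈ Δ) (F : (↥Δ → Bool) → ℝ) :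
    ∑ ω : ↥Δ → Bool, F ω
      = ∑ ω' : ↥(Δ \ {x} : Finset V) → Bool,
          (F (glue Δ x ω' true) + F (glue Δ x ω' false)) := by
  rw [← Equiv.sum_comp (glueEquiv Δ x hx).symm F, Fintype.sum_prod_type]
  refine Finset.sum_congr rfl fun ω' _ => ?_
  rw [Fintype.sum_bool]
  rfl

lemma bern_hasDerivAt (Δ : Finset V) (ω : ↥Δ → Bool) (p : ℝ) :
    HasDerivAt (fun q => bern q Δ ω)
      (∑ y : ↥Δ, (∏ z ∈ Finset.univ.erase y, (if ω z then p else 1 - p)) *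
        (if ω y then (1 : ℝ) else -1)) p := by
  have hder : ∀ y ∈ (Finset.univ : Finset ↥Δ),
      HasDerivAt (fun q : ℝ => if ω y then q else 1 - q)
        (if ω y then (1 : ℝ) else -1) p := by
    intro y _
    by_cases hb : ω y
    · simpa [hb] using (hasDerivAt_id' p)
    · simpa [hb] using ((hasDerivAt_id p).const_sub (1 : ℝ))
  have := HasDerivAt.fun_finsetProd hder
  simpa [bern, smul_eq_mul] using this

lemma prod_erase_glue (Δ : Finset V) (p : ℝ) (y : ↥Δ)
    (ω' : ↥(Δ \ {(y : V)} : Finset V) → Bool) (b : Bool) :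
    (∏ z ∈ (Finset.univ : Finset ↥Δ).erase y,
        (if glue Δ (y : V) ω' b z then p else 1 - p))
      = bern p (Δ \ {(y : V)}) ω' := by
  unfold bern
  refine Finset.prod_bij
    (fun z hz => (⟨(z : V), Finset.mem_sdiff.mpr ⟨z.2, by
      have hne : z ≠ y := (Finset.mem_erase.mp hz).1
      simp only [Finset.mem_singleton]
      exact fun he => hne (Subtype.ext he)⟩⟩ : ↥(Δ \ {(y : V)} : Finset V)))
    (fun z hz => Finset.mem_univ _) ?_ ?_ ?_
  · intro a ha b' hb' hab
    simp only [Subtype.mk.injEq] at hab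
    exact Subtype.ext hab
  · intro w _
    have hwΔ : (w : V) ∈ Δ := (Finset.mem_sdiff.mp w.2).1
    have hwy : (⟨(w : V), hwΔ⟩ : ↥Δ) ≠ y := by
      intro he
      have := (Finset.mem_sdiff.mp w.2).2
      simp only [Finset.mem_singleton] at this
      exact this (congrArg Subtype.val he)
    exact ⟨⟨(w : V), hwΔ⟩, Finset.mem_erase.mpr ⟨hwy, Finset.mem_univ _⟩,
      Subtype.ext rfl⟩
  · intro z hz
    have hne : (z : V) ≠ (y : V) := by
      intro he
      exact (Finset.mem_erase.mp hz).1 (Subtype.ext he)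
    simp only [glue, dif_neg hne]

lemma russo (Δ : Finset V) (c : (↥Δ → Bool) → ℝ) (p : ℝ) :
    HasDerivAt (fun q => ∑ ω : ↥Δ → Bool, bern q Δ ω * c ω)
      (∑ x ∈ Δ, ∑ ω' : ↥(Δ \ {x} : Finset V) → Bool,
        bern p (Δ \ {x}) ω' * (c (glue Δ x ω' true) - c (glue Δ x ω' false))) p := by
  have hd : HasDerivAt (fun q => ∑ ω : ↥Δ → Bool, bern q Δ ω * c ω)
      (∑ ω : ↥Δ → Bool,
        (∑ y : ↥Δ, (∏ z ∈ Finset.univ.erase y, (if ω z then p else 1 - p)) *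
          (if ω y then (1 : ℝ) else -1)) * c ω) p :=
    HasDerivAt.fun_sum fun ω _ => (bern_hasDerivAt Δ ω p).mul_const (c ω)
  convert hd using 1
  simp only [Finset.sum_mul]
  rw [Finset.sum_comm]
  rw [← Finset.sum_coe_sort Δ (fun x => ∑ ω' : ↥(Δ \ {x} : Finset V) → Bool,
        bern p (Δ \ {x}) ω' * (c (glue Δ x ω' true) - c (glue Δ x ω' false)))]
  refine Finset.sum_congr rfl fun y _ => ?_
  rw [sum_glue Δ (y : V) y.2 (fun ω =>
    (∏ z ∈ Finset.univ.erase y, (if ω z then p else 1 - p)) *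
      (if ω y then (1 : ℝ) else -1) * c ω)]
  refine Finset.sum_congr rfl fun ω' _ => ?_
  have hgy : ∀ b : Bool, glue Δ (y : V) ω' b y = b := by
    intro b
    simp [glue]
  rw [prod_erase_glue Δ p y ω' true, prod_erase_glue Δ p y ω' false, hgy, hgy]
  simp only [if_true, Bool.false_eq_true, if_false]
  ring


theorem statement8 (β : ℝ) (hβ0 : 0 ≤ β) (h p : ℝ) (hp : p ∈ Set.Ioo (0 : ℝ) 1)
    (n : ℕ) (hn : 0 < n) (Λ : Finset V) (hΛ : box n ⊆ Λ) :
    HasDerivAt (fun q => mu Λ β q h (crossing n 1))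
      (∑ x ∈ lamOne Λ, ∑ ω : (lamOne Λ \ {x} : Finset V) → Bool,
        bern p (lamOne Λ \ {x}) ω *
          prob Λ β (fun _ => 0) (fun _ => h)
            (plusPivotal (Hx n (openSet (lamOne Λ \ {x}) ω) x) x)) p := by
  classical
  set Δ := lamOne Λ with hΔdef
  have key := russo Δ (fun ω =>
    prob Λ β (fun _ => 0) (fun _ => h)
      (occursOn (crossing n 1) (slab 0 ∪ openSet Δ ω))) p
  have hfun : (fun q => mu Λ β q h (crossing n 1))
      = fun q => ∑ ω : ↥Δ → Bool, bern q Δ ω *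
          prob Λ β (fun _ => 0) (fun _ => h)
            (occursOn (crossing n 1) (slab 0 ∪ openSet Δ ω)) := rfl
  rw [hfun]
  convert key using 1
  refine Finset.sum_congr rfl fun x hxΔ => ?_
  refine Finset.sum_congr rfl fun ω' _ => ?_
  congr 1
  set S := openSet (Δ \ {x}) ω' with hSdef
  have hxΛ : x ∈ Λ ∧ x.2.2 = 1 := Finset.mem_filter.mp hxΔ
  have hxnot : x ∉ slab 0 ∪ S := by
    rintro (hx0 | hxS)
    · have h1 : x.2.2 ≤ (0 : ℤ) := hx0.2
      rw [hxΛ.2] at h1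
      norm_num at h1
    · obtain ⟨hm, _⟩ := hxS
      have := (Finset.mem_sdiff.mp hm).2
      simp at this
  have hopenT : openSet Δ (glue Δ x ω' true) = S ∪ {x} := by
    ext v
    constructor
    · rintro ⟨hv, hval⟩
      by_cases hvx : v = x
      · exact Or.inr hvx
      · simp only [glue, dif_neg hvx] at hval
        exact Or.inl ⟨Finset.mem_sdiff.mpr ⟨hv, by simp [hvx]⟩, hval⟩
    · rintro (⟨hm, hval⟩ | hvx)
      · have hvΔ : v ∈ Δ := (Finset.mem_sdiff.mp hm).1
        have hvx : v ≠ x := by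
          have := (Finset.mem_sdiff.mp hm).2
          simpa using this
        refine ⟨hvΔ, ?_⟩
        simp only [glue, dif_neg hvx]
        exact hval
      · have hvx : v = x := hvx
        subst hvx
        exact ⟨hxΔ, by simp [glue]⟩
  have hopenF : openSet Δ (glue Δ x ω' false) = S := by
    ext v
    constructor
    · rintro ⟨hv, hval⟩
      by_cases hvx : v = x
      · subst hvx
        simp only [glue, dif_pos rfl] at hval
        exact absurd hval (by simp)
      · simp only [glue, dif_neg hvx] at hval
        exact ⟨Finset.mem_sdiff.mpr ⟨hv, by simp [hvx]⟩, hval⟩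
    · rintro ⟨hm, hval⟩
      have hvΔ : v ∈ Δ := (Finset.mem_sdiff.mp hm).1
      have hvx : v ≠ x := by
        have := (Finset.mem_sdiff.mp hm).2
        simpa using this
      refine ⟨hvΔ, ?_⟩
      simp only [glue, dif_neg hvx]
      exact hval
  have e1 : prob Λ β (fun _ => 0) (fun _ => h)
        (occursOn (crossing n 1) (slab 0 ∪ openSet Δ (glue Δ x ω' true)))
      = prob Λ β (fun _ => 0) (fun _ => h)
        (occursOn (crossing n 1) ((slab 0 ∪ S) ∪ {x})) := by
    rw [hopenT, Set.union_assoc]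
  have e2 : prob Λ β (fun _ => 0) (fun _ => h)
        (occursOn (crossing n 1) (slab 0 ∪ openSet Δ (glue Δ x ω' false)))
      = prob Λ β (fun _ => 0) (fun _ => h)
        (occursOn (crossing n 1) (slab 0 ∪ S)) := by
    rw [hopenF]
  rw [e1, e2,
    prob_sdiff Λ β (fun _ => 0) (fun _ => h)
      (occursOn_mono (crossing n 1) Set.subset_union_left),
    ← plusPivotal_occursOn (crossing_increasing n 1) hxnot]
  rfl

end Ising
end

section
/- Let T be the triangular lattice: the graph with vertex set ℤ² in which u and v are adjacent if and only if u−v ∈ {±(1,0), ±(0,1), ±(1,1)}, and let R_n := [−n,n]² ∩ ℤ². For every n ∈ ℕ and every configuration σ ∈ {−1,+1}^{R_n}, exactly one of the following two statements holds: (a) there is a path in T, all of whose vertices lie in R_n and carry spin +1, joining some vertex with first coordinate −n to some vertex with first coordinate n; (b) there is a path in T, all of whose vertices lie in R_n and carry spin −1, joining some vertex with second coordinate −n to some vertex with second coordinate n. -/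
open scoped BigOperators
open Classical Filter MeasureTheory

namespace Ising

/-- Vertices of the two-dimensional triangular lattice. -/
abbrev V2 : Type := ℤ × ℤ

/-- The six difference vectors of the triangular lattice `T`. -/
def dirs2 : Finset V2 := {(1,0), (-1,0), (0,1), (0,-1), (1,1), (-1,-1)}

/-- Adjacency in the triangular lattice `T`. -/
def adj2 (u v : V2) : Prop := v - u ∈ dirs2

/-- The square `R_n = [-n,n]² ∩ ℤ²`. -/
noncomputable def rbox (n : ℕ) : Finset V2 :=
  Finset.Icc (-(n : ℤ)) (n : ℤ) ×ˢ Finset.Icc (-(n : ℤ)) (n : ℤ)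

set_option maxHeartbeats 1000000

lemma mem_dirs2_iff (d : V2) : d ∈ dirs2 ↔
    d = (1,0) ∨ d = (-1,0) ∨ d = (0,1) ∨ d = (0,-1) ∨ d = (1,1) ∨ d = (-1,-1) := by
  simp [dirs2]

lemma adj2_coord {a b : V2} (h : adj2 a b) :
    (b.1 - a.1 = 1 ∧ b.2 - a.2 = 0) ∨ (b.1 - a.1 = -1 ∧ b.2 - a.2 = 0) ∨
    (b.1 - a.1 = 0 ∧ b.2 - a.2 = 1) ∨ (b.1 - a.1 = 0 ∧ b.2 - a.2 = -1) ∨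
    (b.1 - a.1 = 1 ∧ b.2 - a.2 = 1) ∨ (b.1 - a.1 = -1 ∧ b.2 - a.2 = -1) := by
  rw [adj2, mem_dirs2_iff] at h
  rcases h with h|h|h|h|h|h <;>
    simp only [Prod.ext_iff, Prod.fst_sub, Prod.snd_sub] at h <;> tauto

lemma adj2_symm {a b : V2} (h : adj2 a b) : adj2 b a := by
  rw [adj2, mem_dirs2_iff] at h ⊢
  have e : a - b = -(b - a) := by ring
  rcases h with h|h|h|h|h|h <;> rw [e, h] <;> decide

lemma mem_rbox {n : ℕ} {v : V2} : v ∈ rbox n ↔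
    -(n:ℤ) ≤ v.1 ∧ v.1 ≤ n ∧ -(n:ℤ) ≤ v.2 ∧ v.2 ≤ n := by
  simp [rbox, Finset.mem_product, Finset.mem_Icc, and_assoc]

lemma z2add : ∀ x : ZMod 2, x + x = 0 := by decide
lemma z2cancel : ∀ {x y : ZMod 2}, x + y = 0 → x = y := by decide

lemma mem_of_getLast?' {α : Type*} {l : List α} {a : α} (h : l.getLast? = some a) : a ∈ l := by
  obtain ⟨h', rfl⟩ := List.mem_getLast?_eq_getLast (h ▸ rfl : a ∈ l.getLast?)
  exact List.getLast_mem h'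

lemma mem_of_head?' {α : Type*} {l : List α} {a : α} (h : l.head? = some a) : a ∈ l :=
  List.mem_of_mem_head? (h ▸ rfl)

/-- Sum of an edge-function over consecutive pairs of a list. -/
noncomputable def esum (F : V2 → V2 → ZMod 2) : List V2 → ZMod 2
  | [] => 0
  | [_] => 0
  | a :: b :: t => F a b + esum F (b :: t)

lemma esum_add (F G : V2 → V2 → ZMod 2) :
    ∀ l : List V2, esum (fun a b => F a b + G a b) l = esum F l + esum G l
  | [] => by simp [esum]
  | [_] => by simp [esum]
  | a :: b :: t => by
      simp only [esum, esum_add F G (b :: t)]; ring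

lemma esum_tele (F : V2 → V2 → ZMod 2) (φ : V2 → ZMod 2) :
    ∀ l : List V2, l.Chain' adj2 →
      (∀ a b, adj2 a b → a ∈ l → b ∈ l → F a b = φ a + φ b) →
      ∀ x y, l.head? = some x → l.getLast? = some y → esum F l = φ x + φ y
  | [] => by intro _ _ x y hx; simp at hx
  | [a] => by
      intro _ _ x y hx hy
      simp only [List.head?_cons, Option.some.injEq] at hx
      simp only [List.getLast?_singleton, Option.some.injEq] at hy
      subst hx; subst hy; simp [esum, z2add]
  | a :: b :: t => by
      intro hc hF x y hx hy
      change List.IsChain _ _ at hc; rw [List.isChain_cons_cons] at hc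
      simp only [List.head?_cons, Option.some.injEq] at hx
      rw [List.getLast?_cons_cons] at hy
      subst hx
      have ih := esum_tele F φ (b :: t) hc.2
        (fun a' b' h ha hb => hF a' b' h (List.mem_cons_of_mem _ ha) (List.mem_cons_of_mem _ hb))
        b y rfl hy
      have hab := hF a b hc.1 List.mem_cons_self (List.mem_cons_of_mem _ List.mem_cons_self)
      simp only [esum, ih, hab]
      rw [add_assoc, ← add_assoc (φ b), z2add, zero_add]

/-- extract a sub-chain from the head to a given element -/
lemma chain_to {α : Type*} (r : α → α → Prop) :
    ∀ (l : List α) (a : α), (a :: l).Chain' r → ∀ u' ∈ a :: l,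
      ∃ l' : List α, (a :: l').Chain' r ∧ (∀ v ∈ a :: l', v ∈ a :: l) ∧
        (a :: l').getLast? = some u'
  | l, a, hc, u', hu => by
      rcases List.mem_cons.1 hu with h | h
      · exact ⟨[], List.isChain_singleton a, by simp, by simp [h.symm]⟩
      · match l with
        | [] => simp at h
        | b :: t =>
          have hc' : (b :: t).Chain' r := (List.isChain_cons_cons.1 hc).2
          obtain ⟨l'', h1, h2, h3⟩ := chain_to r t b hc' u' h
          refine ⟨b :: l'', ?_, ?_, ?_⟩
          · exact List.isChain_cons_cons.2 ⟨(List.isChain_cons_cons.1 hc).1, h1⟩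
          · intro v hv
            rcases List.mem_cons.1 hv with h | h
            · simp [h]
            · simp only [List.mem_cons]
              rcases List.mem_cons.1 (h2 v h) with h' | h'
              · exact Or.inr (Or.inl h')
              · exact Or.inr (Or.inr h')
          · simpa using h3

lemma chain_between {α : Type*} (r : α → α → Prop) :
    ∀ (l : List α), l.Chain' r → ∀ u u', u ∈ l → u' ∈ l →
      ∃ l' : List α, l'.Chain' r ∧ (∀ v ∈ l', v ∈ l) ∧
        ((l'.head? = some u ∧ l'.getLast? = some u') ∨
         (l'.head? = some u' ∧ l'.getLast? = some u))
  | [], _, u, u', hu, _ => by simp at hu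
  | a :: t, hc, u, u', hu, hu' => by
      rcases List.mem_cons.1 hu with h | h
      · subst h
        obtain ⟨l', h1, h2, h3⟩ := chain_to r t u hc u' hu'
        exact ⟨u :: l', h1, h2, Or.inl ⟨rfl, h3⟩⟩
      · rcases List.mem_cons.1 hu' with h' | h'
        · subst h'
          obtain ⟨l', h1, h2, h3⟩ := chain_to r t u' hc u (List.mem_cons_of_mem _ h)
          exact ⟨u' :: l', h1, h2, Or.inr ⟨rfl, h3⟩⟩
        · match t with
          | [] => simp at h
          | b :: t' =>
            obtain ⟨l', h1, h2, h3⟩ :=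
              chain_between r (b :: t') (List.isChain_cons_cons.1 hc).2 u u' h h'
            exact ⟨l', h1, fun v hv => List.mem_cons_of_mem _ (h2 v hv), h3⟩

/-- crossing parity contribution of an (unordered) edge {a,b} to the downward ray at z -/
noncomputable def ec (z a b : V2) : ZMod 2 :=
  if ((b.1 - a.1 = 1 ∧ (b.2 - a.2 = 0 ∨ b.2 - a.2 = 1)) ∧ a.1 = z.1 ∧ a.2 ≤ z.2) ∨
     ((a.1 - b.1 = 1 ∧ (a.2 - b.2 = 0 ∨ a.2 - b.2 = 1)) ∧ b.1 = z.1 ∧ b.2 ≤ z.2)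
  then 1 else 0

lemma loc10 (z z' a b : V2) (hd1 : z'.1 = z.1 + 1) (hd2 : z'.2 = z.2)
    (h : adj2 a b) (ha : a ≠ z) (ha' : a ≠ z') (hb : b ≠ z) (hb' : b ≠ z') :
    ec z a b + ec z' a b =
      (if a.1 = z.1 + 1 ∧ a.2 ≤ z.2 then (1 : ZMod 2) else 0) +
      (if b.1 = z.1 + 1 ∧ b.2 ≤ z.2 then (1 : ZMod 2) else 0) := by
  have hc := adj2_coord h
  simp only [ne_eq, Prod.ext_iff, not_and] at ha ha' hb hb'
  rcases hc with ⟨h1,h2⟩|⟨h1,h2⟩|⟨h1,h2⟩|⟨h1,h2⟩|⟨h1,h2⟩|⟨h1,h2⟩ <;>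
    (simp only [ec]; split_ifs <;> first | decide | omega)

lemma loc11 (z z' a b : V2) (hd1 : z'.1 = z.1 + 1) (hd2 : z'.2 = z.2 + 1)
    (h : adj2 a b) (ha : a ≠ z) (ha' : a ≠ z') (hb : b ≠ z) (hb' : b ≠ z') :
    ec z a b + ec z' a b =
      (if a.1 = z.1 + 1 ∧ a.2 ≤ z.2 + 1 then (1 : ZMod 2) else 0) +
      (if b.1 = z.1 + 1 ∧ b.2 ≤ z.2 + 1 then (1 : ZMod 2) else 0) := by
  have hc := adj2_coord h
  simp only [ne_eq, Prod.ext_iff, not_and] at ha ha' hb hb'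
  rcases hc with ⟨h1,h2⟩|⟨h1,h2⟩|⟨h1,h2⟩|⟨h1,h2⟩|⟨h1,h2⟩|⟨h1,h2⟩ <;>
    (simp only [ec]; split_ifs <;> first | decide | omega)

lemma loc01 (z z' a b : V2) (hd1 : z'.1 = z.1) (hd2 : z'.2 = z.2 + 1)
    (h : adj2 a b) (ha : a ≠ z) (ha' : a ≠ z') (hb : b ≠ z) (hb' : b ≠ z') :
    ec z a b + ec z' a b = 0 := by
  have hc := adj2_coord h
  simp only [ne_eq, Prod.ext_iff, not_and] at ha ha' hb hb'
  rcases hc with ⟨h1,h2⟩|⟨h1,h2⟩|⟨h1,h2⟩|⟨h1,h2⟩|⟨h1,h2⟩|⟨h1,h2⟩ <;>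
    (simp only [ec]; split_ifs <;> first | decide | omega)

/-- the crossing-parity function associated to a left-right `+` path -/
noncomputable def hfun (n : ℕ) (aK : V2) (pa : List V2) (z : V2) : ZMod 2 :=
  esum (ec z) pa + (if (n:ℤ) ≤ z.1 ∧ aK.2 ≤ z.2 then 1 else 0)

section NB
variable {n : ℕ} {pa : List V2} {a0 aK : V2}
variable (hpa : pa.Chain' adj2) (hbox : ∀ v ∈ pa, v ∈ rbox n)
variable (h0 : pa.head? = some a0) (hK : pa.getLast? = some aK)
variable (ha0 : a0.1 = -(n:ℤ)) (haK : aK.1 = (n:ℤ))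

include hpa hbox h0 hK ha0 haK

lemma hstep10 {z z' : V2} (hd1 : z'.1 = z.1 + 1) (hd2 : z'.2 = z.2)
    (hz : z ∉ pa) (hz' : z' ∉ pa) (hzb : z ∈ rbox n) (hz'b : z' ∈ rbox n) :
    hfun n aK pa z = hfun n aK pa z' := by
  apply z2cancel
  have e1 : esum (ec z) pa + esum (ec z') pa =
      (if a0.1 = z.1 + 1 ∧ a0.2 ≤ z.2 then (1 : ZMod 2) else 0) +
      (if aK.1 = z.1 + 1 ∧ aK.2 ≤ z.2 then (1 : ZMod 2) else 0) := by
    rw [← esum_add]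
    exact esum_tele _ _ pa hpa
      (fun a b hab hai hbi => loc10 z z' a b hd1 hd2 hab
        (fun e => hz (e ▸ hai)) (fun e => hz' (e ▸ hai))
        (fun e => hz (e ▸ hbi)) (fun e => hz' (e ▸ hbi))) a0 aK h0 hK
  have hzc := mem_rbox.1 hzb
  have hz'c := mem_rbox.1 hz'b
  have haKb := mem_rbox.1 (hbox aK (mem_of_getLast?' hK))
  simp only [hfun]
  have : esum (ec z) pa + (if (n:ℤ) ≤ z.1 ∧ aK.2 ≤ z.2 then (1:ZMod 2) else 0) +
      (esum (ec z') pa + (if (n:ℤ) ≤ z'.1 ∧ aK.2 ≤ z'.2 then (1:ZMod 2) else 0)) =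
      (esum (ec z) pa + esum (ec z') pa) +
      ((if (n:ℤ) ≤ z.1 ∧ aK.2 ≤ z.2 then (1:ZMod 2) else 0) +
       (if (n:ℤ) ≤ z'.1 ∧ aK.2 ≤ z'.2 then (1:ZMod 2) else 0)) := by ring
  rw [this, e1]
  split_ifs <;> first | decide | omega

lemma hstep11 {z z' : V2} (hd1 : z'.1 = z.1 + 1) (hd2 : z'.2 = z.2 + 1)
    (hz : z ∉ pa) (hz' : z' ∉ pa) (hzb : z ∈ rbox n) (hz'b : z' ∈ rbox n) :
    hfun n aK pa z = hfun n aK pa z' := by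
  apply z2cancel
  have e1 : esum (ec z) pa + esum (ec z') pa =
      (if a0.1 = z.1 + 1 ∧ a0.2 ≤ z.2 + 1 then (1 : ZMod 2) else 0) +
      (if aK.1 = z.1 + 1 ∧ aK.2 ≤ z.2 + 1 then (1 : ZMod 2) else 0) := by
    rw [← esum_add]
    exact esum_tele _ _ pa hpa
      (fun a b hab hai hbi => loc11 z z' a b hd1 hd2 hab
        (fun e => hz (e ▸ hai)) (fun e => hz' (e ▸ hai))
        (fun e => hz (e ▸ hbi)) (fun e => hz' (e ▸ hbi))) a0 aK h0 hK
  have hzc := mem_rbox.1 hzb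
  have hz'c := mem_rbox.1 hz'b
  have haKb := mem_rbox.1 (hbox aK (mem_of_getLast?' hK))
  simp only [hfun]
  have : esum (ec z) pa + (if (n:ℤ) ≤ z.1 ∧ aK.2 ≤ z.2 then (1:ZMod 2) else 0) +
      (esum (ec z') pa + (if (n:ℤ) ≤ z'.1 ∧ aK.2 ≤ z'.2 then (1:ZMod 2) else 0)) =
      (esum (ec z) pa + esum (ec z') pa) +
      ((if (n:ℤ) ≤ z.1 ∧ aK.2 ≤ z.2 then (1:ZMod 2) else 0) +
       (if (n:ℤ) ≤ z'.1 ∧ aK.2 ≤ z'.2 then (1:ZMod 2) else 0)) := by ring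
  rw [this, e1]
  split_ifs <;> first | decide | omega

lemma hstep01 {z z' : V2} (hd1 : z'.1 = z.1) (hd2 : z'.2 = z.2 + 1)
    (hz : z ∉ pa) (hz' : z' ∉ pa) (hzb : z ∈ rbox n) (hz'b : z' ∈ rbox n) :
    hfun n aK pa z = hfun n aK pa z' := by
  apply z2cancel
  have e1 : esum (ec z) pa + esum (ec z') pa = 0 := by
    rw [← esum_add]
    have := esum_tele (fun a b => ec z a b + ec z' a b) (fun _ => 0) pa hpa
      (fun a b hab hai hbi => by
        show ec z a b + ec z' a b = 0 + 0
        rw [loc01 z z' a b hd1 hd2 hab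
          (fun e => hz (e ▸ hai)) (fun e => hz' (e ▸ hai))
          (fun e => hz (e ▸ hbi)) (fun e => hz' (e ▸ hbi))]; simp) a0 aK h0 hK
    simpa using this
  have hzc := mem_rbox.1 hzb
  have hz'c := mem_rbox.1 hz'b
  have haKb := mem_rbox.1 (hbox aK (mem_of_getLast?' hK))
  have haKne : aK ≠ z' := fun e => hz' (e ▸ mem_of_getLast?' hK)
  have haKne' : ¬(aK.1 = z'.1 ∧ aK.2 = z'.2) := by
    intro ⟨u, v⟩; exact haKne (Prod.ext_iff.2 ⟨u, v⟩)
  simp only [hfun]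
  have : esum (ec z) pa + (if (n:ℤ) ≤ z.1 ∧ aK.2 ≤ z.2 then (1:ZMod 2) else 0) +
      (esum (ec z') pa + (if (n:ℤ) ≤ z'.1 ∧ aK.2 ≤ z'.2 then (1:ZMod 2) else 0)) =
      (esum (ec z) pa + esum (ec z') pa) +
      ((if (n:ℤ) ≤ z.1 ∧ aK.2 ≤ z.2 then (1:ZMod 2) else 0) +
       (if (n:ℤ) ≤ z'.1 ∧ aK.2 ≤ z'.2 then (1:ZMod 2) else 0)) := by ring
  rw [this, e1]
  split_ifs <;> first | decide | omega

lemma hstep {z z' : V2} (hadj : adj2 z z')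
    (hz : z ∉ pa) (hz' : z' ∉ pa) (hzb : z ∈ rbox n) (hz'b : z' ∈ rbox n) :
    hfun n aK pa z = hfun n aK pa z' := by
  rcases adj2_coord hadj with ⟨h1,h2⟩|⟨h1,h2⟩|⟨h1,h2⟩|⟨h1,h2⟩|⟨h1,h2⟩|⟨h1,h2⟩
  · exact hstep10 hpa hbox h0 hK ha0 haK (by omega) (by omega) hz hz' hzb hz'b
  · exact (hstep10 hpa hbox h0 hK ha0 haK (by omega) (by omega) hz' hz hz'b hzb).symm
  · exact hstep01 hpa hbox h0 hK ha0 haK (by omega) (by omega) hz hz' hzb hz'b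
  · exact (hstep01 hpa hbox h0 hK ha0 haK (by omega) (by omega) hz' hz hz'b hzb).symm
  · exact hstep11 hpa hbox h0 hK ha0 haK (by omega) (by omega) hz hz' hzb hz'b
  · exact (hstep11 hpa hbox h0 hK ha0 haK (by omega) (by omega) hz' hz hz'b hzb).symm

lemma hbot {z : V2} (hz : z ∉ pa) (hzb : z ∈ rbox n) (h2 : z.2 = -(n:ℤ)) :
    hfun n aK pa z = 0 := by
  have hzc := mem_rbox.1 hzb
  have haKb := mem_rbox.1 (hbox aK (mem_of_getLast?' hK))
  have haKne : ¬(aK.1 = z.1 ∧ aK.2 = z.2) := by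
    intro ⟨u, v⟩
    exact hz ((Prod.ext_iff.2 ⟨u, v⟩ : aK = z) ▸ mem_of_getLast?' hK)
  have e1 : esum (ec z) pa = 0 := by
    have := esum_tele (ec z) (fun _ => 0) pa hpa
      (fun a b hab hai hbi => by
        have hac := mem_rbox.1 (hbox a hai)
        have hbc := mem_rbox.1 (hbox b hbi)
        have hane : ¬(a.1 = z.1 ∧ a.2 = z.2) := by
          intro ⟨u, v⟩; exact hz ((Prod.ext_iff.2 ⟨u,v⟩ : a = z) ▸ hai)
        have hbne : ¬(b.1 = z.1 ∧ b.2 = z.2) := by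
          intro ⟨u, v⟩; exact hz ((Prod.ext_iff.2 ⟨u,v⟩ : b = z) ▸ hbi)
        simp only [ec]
        split_ifs with hh
        · exfalso; omega
        · simp) a0 aK h0 hK
    simpa using this
  simp only [hfun, e1]
  split_ifs with hh
  · exfalso; omega
  · simp

lemma htop {z : V2} (hz : z ∉ pa) (hzb : z ∈ rbox n) (h2 : z.2 = (n:ℤ)) :
    hfun n aK pa z = 1 := by
  have hzc := mem_rbox.1 hzb
  have haKb := mem_rbox.1 (hbox aK (mem_of_getLast?' hK))
  have ha0b := mem_rbox.1 (hbox a0 (mem_of_head?' h0))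
  have e1 : esum (ec z) pa =
      (if z.1 + 1 ≤ a0.1 then (1:ZMod 2) else 0) + (if z.1 + 1 ≤ aK.1 then (1:ZMod 2) else 0) := by
    exact esum_tele (ec z) (fun p => if z.1 + 1 ≤ p.1 then (1:ZMod 2) else 0) pa hpa
      (fun a b hab hai hbi => by
        have hac := mem_rbox.1 (hbox a hai)
        have hbc := mem_rbox.1 (hbox b hbi)
        have hane : ¬(a.1 = z.1 ∧ a.2 = z.2) := by
          intro ⟨u, v⟩; exact hz ((Prod.ext_iff.2 ⟨u,v⟩ : a = z) ▸ hai)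
        have hbne : ¬(b.1 = z.1 ∧ b.2 = z.2) := by
          intro ⟨u, v⟩; exact hz ((Prod.ext_iff.2 ⟨u,v⟩ : b = z) ▸ hbi)
        have hcc := adj2_coord hab
        simp only [ec]
        split_ifs <;> first | decide | omega) a0 aK h0 hK
  simp only [hfun, e1]
  split_ifs <;> first | decide | omega


lemma hconstQ :
    ∀ l : List V2, l.Chain' adj2 → (∀ v ∈ l, v ∈ rbox n ∧ v ∉ pa) →
      ∀ x y, l.head? = some x → l.getLast? = some y →
        hfun n aK pa x = hfun n aK pa y := by
  intro l
  induction l with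
  | nil => intro _ _ x y hx; simp at hx
  | cons a t ih =>
    intro hc hm x y hx hy
    simp only [List.head?_cons, Option.some.injEq] at hx
    subst hx
    match t with
    | [] =>
      simp only [List.getLast?_singleton, Option.some.injEq] at hy
      subst hy; rfl
    | b :: t' =>
      rw [List.getLast?_cons_cons] at hy
      have hc' := List.isChain_cons_cons.1 hc
      have hm' : ∀ v ∈ b :: t', v ∈ rbox n ∧ v ∉ pa :=
        fun v hv => hm v (List.mem_cons_of_mem _ hv)
      have hab := hm a List.mem_cons_self
      have hbb := hm b (List.mem_cons_of_mem _ List.mem_cons_self)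
      have step := hstep hpa hbox h0 hK ha0 haK hc'.1 hab.2 hbb.2 hab.1 hbb.1
      rw [step]
      exact ih hc'.2 hm' b y rfl hy

end NB

theorem notboth (n : ℕ) (σ : V2 → Bool)
    (hA : ∃ l : List V2, l.Chain' adj2 ∧ (∀ v ∈ l, v ∈ rbox n ∧ σ v = true) ∧
        (∃ u ∈ l, u.1 = -(n : ℤ)) ∧ (∃ u ∈ l, u.1 = (n : ℤ)))
    (hB : ∃ l : List V2, l.Chain' adj2 ∧ (∀ v ∈ l, v ∈ rbox n ∧ σ v = false) ∧
        (∃ u ∈ l, u.2 = -(n : ℤ)) ∧ (∃ u ∈ l, u.2 = (n : ℤ))) : False := by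
  obtain ⟨la, hca, hma, ⟨u, hu, hu1⟩, ⟨u', hu', hu'1⟩⟩ := hA
  have hPA : ∃ (pa : List V2) (a0 aK : V2), pa.Chain' adj2 ∧
      (∀ v ∈ pa, v ∈ rbox n ∧ σ v = true) ∧ pa.head? = some a0 ∧
      pa.getLast? = some aK ∧ a0.1 = -(n:ℤ) ∧ aK.1 = (n:ℤ) := by
    obtain ⟨l', h1, h2, h3⟩ := chain_between adj2 la hca u u' hu hu'
    rcases h3 with ⟨hh, hl⟩ | ⟨hh, hl⟩
    · exact ⟨l', u, u', h1, fun v hv => hma v (h2 v hv), hh, hl, hu1, hu'1⟩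
    · refine ⟨l'.reverse, u, u', ?_, ?_, ?_, ?_, hu1, hu'1⟩
      · show List.IsChain _ _; rw [List.isChain_reverse]; exact h1.imp (fun a b h => adj2_symm h)
      · intro v hv; exact hma v (h2 v (List.mem_reverse.1 hv))
      · rw [List.head?_reverse]; exact hl
      · rw [List.getLast?_reverse]; exact hh
  obtain ⟨lb, hcb, hmb, ⟨w, hw, hw1⟩, ⟨w', hw', hw'1⟩⟩ := hB
  have hQB : ∃ (qb : List V2) (b0 bK : V2), qb.Chain' adj2 ∧
      (∀ v ∈ qb, v ∈ rbox n ∧ σ v = false) ∧ qb.head? = some b0 ∧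
      qb.getLast? = some bK ∧ b0.2 = -(n:ℤ) ∧ bK.2 = (n:ℤ) := by
    obtain ⟨l', h1, h2, h3⟩ := chain_between adj2 lb hcb w w' hw hw'
    rcases h3 with ⟨hh, hl⟩ | ⟨hh, hl⟩
    · exact ⟨l', w, w', h1, fun v hv => hmb v (h2 v hv), hh, hl, hw1, hw'1⟩
    · refine ⟨l'.reverse, w, w', ?_, ?_, ?_, ?_, hw1, hw'1⟩
      · show List.IsChain _ _; rw [List.isChain_reverse]; exact h1.imp (fun a b h => adj2_symm h)
      · intro v hv; exact hmb v (h2 v (List.mem_reverse.1 hv))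
      · rw [List.head?_reverse]; exact hl
      · rw [List.getLast?_reverse]; exact hh
  obtain ⟨pa, a0, aK, hpa, hmem, h0, hK, ha0, haK⟩ := hPA
  obtain ⟨qb, b0, bK, hqc, hqmem, hq0, hqK, hb0, hbK⟩ := hQB
  have hboxpa : ∀ v ∈ pa, v ∈ rbox n := fun v hv => (hmem v hv).1
  have notin : ∀ v ∈ qb, v ∈ rbox n ∧ v ∉ pa := by
    intro v hv
    refine ⟨(hqmem v hv).1, fun hvp => ?_⟩
    have h1 := (hmem v hvp).2
    have h2 := (hqmem v hv).2
    rw [h1] at h2; exact Bool.noConfusion h2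
  have hb0m : b0 ∈ qb := mem_of_head?' hq0
  have hbKm : bK ∈ qb := mem_of_getLast?' hqK
  have hc := hconstQ hpa hboxpa h0 hK ha0 haK qb hqc notin b0 bK hq0 hqK
  rw [hbot hpa hboxpa h0 hK ha0 haK (notin b0 hb0m).2 (notin b0 hb0m).1 hb0,
      htop hpa hboxpa h0 hK ha0 haK (notin bK hbKm).2 (notin bK hbKm).1 hbK] at hc
  exact absurd hc (by decide)


-- ### the interface walk
lemma mem_ebox {n : ℕ} {v : V2} : v ∈ rbox (n+1) ↔
    -((n:ℤ)+1) ≤ v.1 ∧ v.1 ≤ (n:ℤ)+1 ∧ -((n:ℤ)+1) ≤ v.2 ∧ v.2 ≤ (n:ℤ)+1 := by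
  rw [mem_rbox]; omega

/-- left virtual column -/
def lc (n : ℕ) (v : V2) : Prop := v.1 = -((n:ℤ)+1) ∧ -((n:ℤ)+1) ≤ v.2 ∧ v.2 ≤ (n:ℤ)
/-- right virtual column -/
def rc (n : ℕ) (v : V2) : Prop := v.1 = (n:ℤ)+1 ∧ -(n:ℤ) ≤ v.2 ∧ v.2 ≤ (n:ℤ)+1

/-- the extended colouring -/
noncomputable def chi (n : ℕ) (σ : V2 → Bool) (v : V2) : Bool :=
  if v ∈ rbox n then σ v else (if lc n v ∨ rc n v then true else false)

def GoalA (n : ℕ) (σ : V2 → Bool) : Prop :=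
  ∃ l : List V2, l.Chain' adj2 ∧ (∀ v ∈ l, v ∈ rbox n ∧ σ v = true) ∧
    (∃ u ∈ l, u.1 = -(n : ℤ)) ∧ (∃ u ∈ l, u.1 = (n : ℤ))

def GoalB (n : ℕ) (σ : V2 → Bool) : Prop :=
  ∃ l : List V2, l.Chain' adj2 ∧ (∀ v ∈ l, v ∈ rbox n ∧ σ v = false) ∧
    (∃ u ∈ l, u.2 = -(n : ℤ)) ∧ (∃ u ∈ l, u.2 = (n : ℤ))

lemma chi_true_coords {n : ℕ} {σ : V2 → Bool} {v : V2} (h : chi n σ v = true) :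
    (-(n:ℤ) ≤ v.1 ∧ v.1 ≤ n ∧ -(n:ℤ) ≤ v.2 ∧ v.2 ≤ n) ∨
    (v.1 = -((n:ℤ)+1) ∧ -((n:ℤ)+1) ≤ v.2 ∧ v.2 ≤ (n:ℤ)) ∨
    (v.1 = (n:ℤ)+1 ∧ -(n:ℤ) ≤ v.2 ∧ v.2 ≤ (n:ℤ)+1) := by
  rw [chi] at h
  split_ifs at h with h1 h2
  · exact Or.inl (mem_rbox.1 h1)
  · rcases h2 with h2 | h2
    · exact Or.inr (Or.inl h2)
    · exact Or.inr (Or.inr h2)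

lemma chi_true_elim {n : ℕ} {σ : V2 → Bool} {v : V2} (h : chi n σ v = true) :
    (v ∈ rbox n ∧ σ v = true) ∨ lc n v ∨ rc n v := by
  rw [chi] at h
  split_ifs at h with h1 h2
  · exact Or.inl ⟨h1, h⟩
  · exact Or.inr h2

lemma chi_false_elim {n : ℕ} {σ : V2 → Bool} {v : V2} (h : chi n σ v = false)
    (hv : v ∈ rbox (n+1)) :
    (v ∈ rbox n ∧ σ v = false) ∨ v.2 = -((n:ℤ)+1) ∨ v.2 = (n:ℤ)+1 := by
  rw [chi] at h
  split_ifs at h with h1 h2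
  · exact Or.inl ⟨h1, h⟩
  · right
    rw [mem_ebox] at hv
    rw [mem_rbox] at h1
    simp only [lc, rc, not_or, not_and] at h2
    omega

lemma chi_false_coords {n : ℕ} {σ : V2 → Bool} {v : V2} (h : chi n σ v = false)
    (hv : v ∈ rbox (n+1)) :
    (-(n:ℤ) ≤ v.1 ∧ v.1 ≤ n ∧ -(n:ℤ) ≤ v.2 ∧ v.2 ≤ n) ∨
    v.2 = -((n:ℤ)+1) ∨ v.2 = (n:ℤ)+1 := by
  rcases chi_false_elim h hv with h | h | h
  · exact Or.inl (mem_rbox.1 h.1)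
  · exact Or.inr (Or.inl h)
  · exact Or.inr (Or.inr h)

/-- rotation by 60 degrees -/
def rot60 (d : V2) : V2 := (d.1 - d.2, d.1)
/-- rotation by -60 degrees -/
def rot300 (d : V2) : V2 := (d.2, d.2 - d.1)

lemma rot60_mem {d : V2} (h : d ∈ dirs2) : rot60 d ∈ dirs2 := by
  rw [mem_dirs2_iff] at h
  rcases h with h|h|h|h|h|h <;> rw [h] <;> decide

lemma dsub_mem {d : V2} (h : d ∈ dirs2) : d - rot60 d ∈ dirs2 := by
  rw [mem_dirs2_iff] at h
  rcases h with h|h|h|h|h|h <;> rw [h] <;> decide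

lemma neg_mem {d : V2} (h : d ∈ dirs2) : -d ∈ dirs2 := by
  rw [mem_dirs2_iff] at h
  rcases h with h|h|h|h|h|h <;> rw [h] <;> decide

lemma rot300_rot60 (d : V2) : rot300 (rot60 d) = d := by
  simp [rot60, rot300]

lemma rot300_sub (x y : V2) : rot300 (x - y) = rot300 x - rot300 y := by
  simp only [rot300, Prod.ext_iff, Prod.fst_sub, Prod.snd_sub]
  exact ⟨trivial, by ring⟩

lemma rot_id (d : V2) : rot60 d + rot300 d = d := by
  simp only [rot60, rot300, Prod.ext_iff, Prod.fst_add, Prod.snd_add]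
  constructor <;> ring

def wnext (s : V2 × V2) : V2 := s.1 + rot60 (s.2 - s.1)
def wprev (s : V2 × V2) : V2 := s.1 + rot300 (s.2 - s.1)

noncomputable def fstep (n : ℕ) (σ : V2 → Bool) (s : V2 × V2) : V2 × V2 :=
  if chi n σ (wnext s) then (wnext s, s.2) else (s.1, wnext s)

noncomputable def walk (n : ℕ) (σ : V2 → Bool) : ℕ → V2 × V2
  | 0 => ((-(n:ℤ)-1, -(n:ℤ)-1), (-(n:ℤ), -(n:ℤ)-1))
  | k+1 => if wnext (walk n σ k) ∈ rbox (n+1) then fstep n σ (walk n σ k) else walk n σ k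

noncomputable def gstep (n : ℕ) (σ : V2 → Bool) (s : V2 × V2) : Option (V2 × V2) :=
  if wprev s ∈ rbox (n+1) then
    some (if chi n σ (wprev s) then (wprev s, s.2) else (s.1, wprev s)) else none

def JInv (n : ℕ) (σ : V2 → Bool) (t : V2) : Prop :=
  GoalA n σ ∨ lc n t ∨
    (∃ l : List V2, l.Chain' adj2 ∧ (∀ v ∈ l, v ∈ rbox n ∧ σ v = true) ∧
      (∃ u ∈ l, u.1 = -(n:ℤ)) ∧ l.getLast? = some t)

def KInv (n : ℕ) (σ : V2 → Bool) (f : V2) : Prop :=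
  GoalB n σ ∨ f.2 = -((n:ℤ)+1) ∨
    (∃ l : List V2, l.Chain' adj2 ∧ (∀ v ∈ l, v ∈ rbox n ∧ σ v = false) ∧
      (∃ u ∈ l, u.2 = -(n:ℤ)) ∧ l.getLast? = some f)

def Inv (n : ℕ) (σ : V2 → Bool) (s : V2 × V2) : Prop :=
  adj2 s.1 s.2 ∧ chi n σ s.1 = true ∧ chi n σ s.2 = false ∧
    s.1 ∈ rbox (n+1) ∧ s.2 ∈ rbox (n+1) ∧ JInv n σ s.1 ∧ KInv n σ s.2

lemma Jstep {n : ℕ} {σ : V2 → Bool} {t t' : V2} (hJ : JInv n σ t)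
    (hadj : adj2 t t') (ht' : chi n σ t' = true) : JInv n σ t' := by
  have hco := adj2_coord hadj
  rcases hJ with hG | hlc | ⟨l, hcl, hml, hex, hlast⟩
  · exact Or.inl hG
  · -- t in left column
    rcases chi_true_elim ht' with ⟨hb, hs⟩ | h | h
    · have hbc := mem_rbox.1 hb
      refine Or.inr (Or.inr ⟨[t'], List.isChain_singleton t', ?_, ⟨t', by simp, ?_⟩, by simp⟩)
      · intro v hv; simp only [List.mem_singleton] at hv; subst hv; exact ⟨hb, hs⟩
      · obtain ⟨e1, e2, e3⟩ := hlc; omega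
    · exact Or.inr (Or.inl h)
    · exfalso; obtain ⟨e1, e2, e3⟩ := hlc; obtain ⟨f1, f2, f3⟩ := h; omega
  · have htl : t ∈ l := mem_of_getLast?' hlast
    have htbox := mem_rbox.1 (hml t htl).1
    rcases chi_true_elim ht' with ⟨hb, hs⟩ | h | h
    · -- extend the list
      refine Or.inr (Or.inr ⟨l ++ [t'], ?_, ?_, ?_, ?_⟩)
      · refine hcl.append (List.isChain_singleton t') ?_
        intro x hx y hy
        simp only [List.head?_cons, Option.mem_def, Option.some.injEq] at hy
        rw [hlast] at hx
        simp only [Option.mem_def, Option.some.injEq] at hx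
        subst hx; subst hy; exact hadj
      · intro v hv
        rcases List.mem_append.1 hv with h' | h'
        · exact hml v h'
        · simp only [List.mem_singleton] at h'; subst h'; exact ⟨hb, hs⟩
      · obtain ⟨u, hu, hu1⟩ := hex; exact ⟨u, List.mem_append.2 (Or.inl hu), hu1⟩
      · rw [List.getLast?_concat]
    · exact Or.inr (Or.inl h)
    · -- t' in right column: GoalA
      left
      obtain ⟨f1, f2, f3⟩ := h
      exact ⟨l, hcl, hml, hex, ⟨t, htl, by omega⟩⟩

lemma Kstep {n : ℕ} {σ : V2 → Bool} {f f' : V2} (hK : KInv n σ f)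
    (hadj : adj2 f f') (hf' : chi n σ f' = false) (hfe : f' ∈ rbox (n+1)) : KInv n σ f' := by
  have hco := adj2_coord hadj
  rcases hK with hG | hbr | ⟨l, hcl, hml, hex, hlast⟩
  · exact Or.inl hG
  · rcases chi_false_elim hf' hfe with ⟨hb, hs⟩ | h | h
    · have hbc := mem_rbox.1 hb
      refine Or.inr (Or.inr ⟨[f'], List.isChain_singleton f', ?_, ⟨f', by simp, ?_⟩, by simp⟩)
      · intro v hv; simp only [List.mem_singleton] at hv; subst hv; exact ⟨hb, hs⟩
      · omega
    · exact Or.inr (Or.inl h)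
    · exfalso; omega
  · have hfl : f ∈ l := mem_of_getLast?' hlast
    have hfbox := mem_rbox.1 (hml f hfl).1
    rcases chi_false_elim hf' hfe with ⟨hb, hs⟩ | h | h
    · refine Or.inr (Or.inr ⟨l ++ [f'], ?_, ?_, ?_, ?_⟩)
      · refine hcl.append (List.isChain_singleton f') ?_
        intro x hx y hy
        simp only [List.head?_cons, Option.mem_def, Option.some.injEq] at hy
        rw [hlast] at hx
        simp only [Option.mem_def, Option.some.injEq] at hx
        subst hx; subst hy; exact hadj
      · intro v hv
        rcases List.mem_append.1 hv with h' | h'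
        · exact hml v h'
        · simp only [List.mem_singleton] at h'; subst h'; exact ⟨hb, hs⟩
      · obtain ⟨u, hu, hu1⟩ := hex; exact ⟨u, List.mem_append.2 (Or.inl hu), hu1⟩
      · rw [List.getLast?_concat]
    · exact Or.inr (Or.inl h)
    · -- f' in top row : GoalB
      left
      exact ⟨l, hcl, hml, hex, ⟨f, hfl, by omega⟩⟩


lemma wnext_sub (s : V2 × V2) : wnext s - s.1 = rot60 (s.2 - s.1) := by
  simp [wnext]

lemma wnext_sub2 (s : V2 × V2) : s.2 - wnext s = (s.2 - s.1) - rot60 (s.2 - s.1) := by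
  simp only [wnext]; ring

lemma adj_t_w {s : V2 × V2} (h : adj2 s.1 s.2) : adj2 s.1 (wnext s) := by
  rw [adj2, wnext_sub]; exact rot60_mem h

lemma adj_w_f {s : V2 × V2} (h : adj2 s.1 s.2) : adj2 (wnext s) s.2 := by
  rw [adj2, wnext_sub2]; exact dsub_mem h

lemma adj_f_w {s : V2 × V2} (h : adj2 s.1 s.2) : adj2 s.2 (wnext s) := by
  rw [adj2]
  have : wnext s - s.2 = -((s.2 - s.1) - rot60 (s.2 - s.1)) := by
    rw [← wnext_sub2]; ring
  rw [this]; exact neg_mem (dsub_mem h)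

lemma step_inv {n : ℕ} {σ : V2 → Bool} {s : V2 × V2} (h : Inv n σ s)
    (hw : wnext s ∈ rbox (n+1)) : Inv n σ (fstep n σ s) := by
  obtain ⟨hadj, ht, hf, hte, hfe, hJ, hK⟩ := h
  rw [fstep]
  split_ifs with hchi
  · exact ⟨adj_w_f hadj, hchi, hf, hw, hfe, Jstep hJ (adj_t_w hadj) hchi, hK⟩
  · refine ⟨adj_t_w hadj, ht, by simpa using hchi, hte, hw, hJ,
      Kstep hK (adj_f_w hadj) (by simpa using hchi) hw⟩

lemma chi_t0 (n : ℕ) (σ : V2 → Bool) : chi n σ (-(n:ℤ)-1, -(n:ℤ)-1) = true := by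
  rw [chi, if_neg, if_pos]
  · exact Or.inl ⟨by omega, by omega, by omega⟩
  · intro h1; have := mem_rbox.1 h1; omega

lemma chi_f0 (n : ℕ) (σ : V2 → Bool) : chi n σ (-(n:ℤ), -(n:ℤ)-1) = false := by
  rw [chi, if_neg, if_neg]
  · rintro (⟨e1, _, _⟩ | ⟨e1, _, _⟩) <;> simp only [] at e1 <;> omega
  · intro h1; have := mem_rbox.1 h1; omega

lemma init_inv (n : ℕ) (σ : V2 → Bool) : Inv n σ (walk n σ 0) := by
  have e : ((-(n:ℤ), -(n:ℤ)-1) : V2) - ((-(n:ℤ)-1, -(n:ℤ)-1) : V2) = ((1:ℤ), (0:ℤ)) := by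
    simp only [Prod.ext_iff, Prod.fst_sub, Prod.snd_sub]; constructor <;> ring
  have hw0 : walk n σ 0 = ((-(n:ℤ)-1, -(n:ℤ)-1), (-(n:ℤ), -(n:ℤ)-1)) := rfl
  rw [hw0]
  refine ⟨?_, chi_t0 n σ, chi_f0 n σ, ?_, ?_, ?_, ?_⟩
  · show adj2 _ _
    rw [adj2]
    show ((-(n:ℤ), -(n:ℤ)-1) : V2) - ((-(n:ℤ)-1, -(n:ℤ)-1) : V2) ∈ dirs2
    rw [e]; decide
  · rw [mem_ebox]
    exact ⟨show -((n:ℤ)+1) ≤ -(n:ℤ)-1 by omega, show -(n:ℤ)-1 ≤ (n:ℤ)+1 by omega,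
      show -((n:ℤ)+1) ≤ -(n:ℤ)-1 by omega, show -(n:ℤ)-1 ≤ (n:ℤ)+1 by omega⟩
  · rw [mem_ebox]
    exact ⟨show -((n:ℤ)+1) ≤ -(n:ℤ) by omega, show -(n:ℤ) ≤ (n:ℤ)+1 by omega,
      show -((n:ℤ)+1) ≤ -(n:ℤ)-1 by omega, show -(n:ℤ)-1 ≤ (n:ℤ)+1 by omega⟩
  · exact Or.inr (Or.inl ⟨show -(n:ℤ)-1 = -((n:ℤ)+1) by ring,
      show -((n:ℤ)+1) ≤ -(n:ℤ)-1 by omega, show -(n:ℤ)-1 ≤ (n:ℤ) by omega⟩)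
  · exact Or.inr (Or.inl (show -(n:ℤ)-1 = -((n:ℤ)+1) by ring))

lemma inv_all (n : ℕ) (σ : V2 → Bool) : ∀ k, Inv n σ (walk n σ k)
  | 0 => init_inv n σ
  | k+1 => by
      rw [walk]
      split_ifs with h
      · exact step_inv (inv_all n σ k) h
      · exact inv_all n σ k

lemma back_lemma {n : ℕ} {σ : V2 → Bool} {s : V2 × V2} (h : Inv n σ s)
    (hw : wnext s ∈ rbox (n+1)) : gstep n σ (fstep n σ s) = some s := by
  obtain ⟨hadj, ht, hf, hte, hfe, hJ, hK⟩ := h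
  rw [fstep]
  split_ifs with hchi
  · have e1 : wprev (wnext s, s.2) = s.1 := by
      show wnext s + rot300 (s.2 - wnext s) = s.1
      rw [wnext_sub2, rot300_sub, rot300_rot60]
      have := rot_id (s.2 - s.1)
      show s.1 + rot60 (s.2 - s.1) + (rot300 (s.2 - s.1) - (s.2 - s.1)) = s.1
      rw [add_assoc]
      have e2 : rot60 (s.2 - s.1) + (rot300 (s.2 - s.1) - (s.2 - s.1)) = 0 := by
        rw [← add_sub_assoc, this, sub_self]
      rw [e2, add_zero]
    rw [gstep, e1]
    rw [if_pos hte, if_pos ht]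
  · have e1 : wprev (s.1, wnext s) = s.2 := by
      show s.1 + rot300 (wnext s - s.1) = s.2
      rw [wnext_sub, rot300_rot60]
      ring
    rw [gstep, e1]
    rw [if_pos hfe, if_neg (by simp_all)]

lemma gstep_zero (n : ℕ) (σ : V2 → Bool) : gstep n σ (walk n σ 0) = none := by
  rw [walk, gstep]
  rw [if_neg]
  intro h
  rw [mem_ebox] at h
  have e : wprev ((-(n:ℤ)-1, -(n:ℤ)-1), (-(n:ℤ), -(n:ℤ)-1)) =
      (-(n:ℤ)-1, -(n:ℤ)-2) := by
    show ((-(n:ℤ)-1, -(n:ℤ)-1) : V2) + rot300 _ = _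
    simp only [rot300, Prod.ext_iff, Prod.fst_add, Prod.snd_add, Prod.fst_sub, Prod.snd_sub]
    constructor <;> ring
  rw [e] at h
  simp only [] at h
  omega

lemma walk_succ {n : ℕ} {σ : V2 → Bool} {k : ℕ} (h : wnext (walk n σ k) ∈ rbox (n+1)) :
    walk n σ (k+1) = fstep n σ (walk n σ k) := by
  rw [walk, if_pos h]

lemma no_repeat (n : ℕ) (σ : V2 → Bool) :
    ∀ i j, i < j → (∀ k, k < j → wnext (walk n σ k) ∈ rbox (n+1)) →
      walk n σ i ≠ walk n σ j := by
  intro i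
  induction i with
  | zero =>
    intro j hij hnt he
    obtain ⟨m, rfl⟩ : ∃ m, j = m + 1 := ⟨j - 1, by omega⟩
    have hb := back_lemma (inv_all n σ m) (hnt m (by omega))
    rw [← walk_succ (hnt m (by omega)), ← he] at hb
    rw [gstep_zero] at hb
    exact nomatch hb
  | succ i ih =>
    intro j hij hnt he
    obtain ⟨m, rfl⟩ : ∃ m, j = m + 1 := ⟨j - 1, by omega⟩
    have hb1 := back_lemma (inv_all n σ i) (hnt i (by omega))
    have hb2 := back_lemma (inv_all n σ m) (hnt m (by omega))
    rw [← walk_succ (hnt i (by omega))] at hb1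
    rw [← walk_succ (hnt m (by omega))] at hb2
    rw [he, hb2] at hb1
    have : walk n σ i = walk n σ m := by injection hb1.symm
    exact ih m (by omega) (fun k hk => hnt k (by omega)) this

lemma exists_terminal (n : ℕ) (σ : V2 → Bool) :
    ∃ k, wnext (walk n σ k) ∉ rbox (n+1) := by
  by_contra hcon
  push_neg at hcon
  set N := ((rbox (n+1)) ×ˢ (rbox (n+1))).card with hN
  have hinj : Set.InjOn (fun k : Fin (N+1) => walk n σ k) ↑(Finset.univ : Finset (Fin (N+1))) := by
    intro i _ j _ hij
    by_contra hne
    rcases lt_or_gt_of_ne (fun e => hne (Fin.ext e)) with h | h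
    · exact no_repeat n σ i j h (fun k _ => hcon k) hij
    · exact no_repeat n σ j i h (fun k _ => hcon k) hij.symm
  have hmaps : ∀ k ∈ (Finset.univ : Finset (Fin (N+1))),
      walk n σ k ∈ (rbox (n+1)) ×ˢ (rbox (n+1)) := by
    intro k _
    have h := inv_all n σ k
    exact Finset.mem_product.2 ⟨h.2.2.2.1, h.2.2.2.2.1⟩
  have := Finset.card_le_card_of_injOn (fun k : Fin (N+1) => walk n σ k) hmaps hinj
  simp only [Finset.card_univ, Fintype.card_fin] at this
  omega

lemma terminal_lemma {n : ℕ} {σ : V2 → Bool} {s : V2 × V2} (h : Inv n σ s)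
    (hw : wnext s ∉ rbox (n+1)) : s.1.1 = (n:ℤ)+1 ∨ s.2.2 = (n:ℤ)+1 := by
  obtain ⟨hadj, ht, hf, hte, hfe, hJ, hK⟩ := h
  have hco := adj2_coord hadj
  have htc := chi_true_coords ht
  have hfc := chi_false_coords hf hfe
  have hte' := mem_ebox.1 hte
  have hfe' := mem_ebox.1 hfe
  rw [mem_ebox] at hw
  have e1 : (wnext s).1 = s.1.1 + ((s.2.1 - s.1.1) - (s.2.2 - s.1.2)) := rfl
  have e2 : (wnext s).2 = s.1.2 + (s.2.1 - s.1.1) := rfl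
  rw [e1, e2] at hw
  omega

theorem atleastone (n : ℕ) (σ : V2 → Bool) : GoalA n σ ∨ GoalB n σ := by
  obtain ⟨k, hk⟩ := exists_terminal n σ
  have hInv := inv_all n σ k
  rcases terminal_lemma hInv hk with h | h
  · left
    rcases hInv.2.2.2.2.2.1 with hG | hlc | ⟨l, _, hml, _, hlast⟩
    · exact hG
    · exfalso; obtain ⟨e1, _, _⟩ := hlc; omega
    · exfalso
      have := mem_rbox.1 (hml _ (mem_of_getLast?' hlast)).1
      omega
  · right
    rcases hInv.2.2.2.2.2.2 with hG | hbr | ⟨l, _, hml, _, hlast⟩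
    · exact hG
    · exfalso; omega
    · exfalso
      have := mem_rbox.1 (hml _ (mem_of_getLast?' hlast)).1
      omega


set_option maxHeartbeats 1000000 in
theorem statement15 (n : ℕ) (hn : 0 < n) (σ : V2 → Bool) :
    Xor'
      (∃ l : List V2, l.Chain' adj2 ∧ (∀ v ∈ l, v ∈ rbox n ∧ σ v = true) ∧
        (∃ u ∈ l, u.1 = -(n : ℤ)) ∧ (∃ u ∈ l, u.1 = (n : ℤ)))
      (∃ l : List V2, l.Chain' adj2 ∧ (∀ v ∈ l, v ∈ rbox n ∧ σ v = false) ∧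
        (∃ u ∈ l, u.2 = -(n : ℤ)) ∧ (∃ u ∈ l, u.2 = (n : ℤ))) := by
  rcases atleastone n σ with hA | hB
  · exact Or.inl ⟨hA, fun hB => notboth n σ hA hB⟩
  · exact Or.inr ⟨hB, fun hA => notboth n σ hA hB⟩

end Ising
end
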